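/- arXiv:math/9801151 — 3 statements merged into one kernel-verified Lean document; each statement's English description precedes it below -/
import Mathlib

section
/- Let 0 < n < ω, let p be a condition of the forcing Q = Q^n, let g : ω → ω, and for every m < ω let A_m ⊆ Q be a maximal antichain below p (an antichain consisting of extensions of p such that every extension of p is compatible with some member of A_m) together with a function h_m : A_m → ℕ satisfying h_m(r) < g(m) for all r ∈ A_m. Then there exist q ≤⁰ p and a function H assigning to each m < ω a finite set H(m) ⊆ ℕ with |H(m)| ≤ 2^m, such that for every m < ω and every r ∈ A_m which is compatible with q, one has h_m(r) ∈ H(m). (This is the Laver property of Q in combinatorial form.) -/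
/-- The position of `x` in the increasing enumeration of `A` (for `x ∈ A`):
the number of elements of `A` below `x`. -/
noncomputable def setIdx (A : Set ℕ) (x : ℕ) : ℕ := Set.ncard {y ∈ A | y < x}

/-- The `i`-th sliceMod `A_i` of `A`: if `⟨k_j⟩` is the increasing enumeration of `A`,
then `sliceMod n A i = {k_j : j ≡ i (mod n)}`. -/
def sliceMod (n : ℕ) (A : Set ℕ) (i : ℕ) : Set ℕ := {x ∈ A | setIdx A x % n = i}

/-- A condition of the forcing `Q = Qⁿ`: a pair `(w, A)` with `w ⊆ ℕ` finite and
`A ⊆ ℕ` infinite. -/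
structure QCond (n : ℕ) where
  w : Finset ℕ
  A : Set ℕ
  infinite : A.Infinite

/-- The order of `Q`: `(w, A) ≤ (v, B)` iff `w ∩ (max v + 1) = v` (i.e. `v ⊆ w` and
every element of `w \ v` exceeds every element of `v`), `w_i \ v_i ⊆ B_i` and
`A_i ⊆ B_i` for every `i < n`. -/
def QLE (n : ℕ) (p q : QCond n) : Prop :=
  q.w ⊆ p.w ∧
  (∀ x ∈ p.w, x ∉ q.w → ∀ y ∈ q.w, y < x) ∧
  (∀ i < n, sliceMod n (↑p.w) i \ sliceMod n (↑q.w) i ⊆ sliceMod n q.A i) ∧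
  (∀ i < n, sliceMod n p.A i ⊆ sliceMod n q.A i)

/-- `p` is a pure extension of `q` : `p ≤ q` and `wᵖ = w^q`. -/
def QPure (n : ℕ) (p q : QCond n) : Prop := QLE n p q ∧ p.w = q.w

/-- Membership in the suborder `Q(D 0, …, D (n-1))`: `A_i ∈ D i` for every `i < n`. -/
def InQD {n : ℕ} (D : Fin n → Ultrafilter ℕ) (p : QCond n) : Prop :=
  ∀ i : Fin n, sliceMod n p.A (i : ℕ) ∈ D i

/-- `p` and `q` are compatible in `Q`. -/
def QCompat (n : ℕ) (p q : QCond n) : Prop := ∃ r : QCond n, QLE n r p ∧ QLE n r q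

namespace L17Proof

namespace L17
attribute [local instance] Classical.propDecidable

lemma setIdx_eq_count (A : Set ℕ) (x : ℕ) : setIdx A x = Nat.count (· ∈ A) x := by
  classical
  rw [Nat.count_eq_card_filter_range, setIdx, ← Set.ncard_coe_finset]
  congr 1
  ext y
  simp [and_comm]

lemma finite_sub (S : Set ℕ) (x : ℕ) : {y ∈ S | y < x}.Finite :=
  (Set.finite_Iio x).subset (fun y hy => hy.2)

lemma setIdx_congr {S T : Set ℕ} {x : ℕ}
    (h : ∀ y, y < x → (y ∈ S ↔ y ∈ T)) : setIdx S x = setIdx T x := by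
  unfold setIdx
  congr 1
  ext y
  exact ⟨fun hy => ⟨(h y hy.2).1 hy.1, hy.2⟩, fun hy => ⟨(h y hy.2).2 hy.1, hy.2⟩⟩

lemma setIdx_strictMonoOn {S : Set ℕ} {x y : ℕ} (hx : x ∈ S) (hxy : x < y) :
    setIdx S x < setIdx S y := by
  apply Set.ncard_lt_ncard
  · constructor
    · exact fun z hz => ⟨hz.1, hz.2.trans hxy⟩
    · intro hcon
      have := hcon ⟨hx, hxy⟩
      exact absurd this.2 (lt_irrefl x)
  · exact finite_sub S y

lemma setIdx_mono {S : Set ℕ} {x y : ℕ} (hxy : x ≤ y) : setIdx S x ≤ setIdx S y :=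
  Set.ncard_le_ncard (fun z hz => ⟨hz.1, lt_of_lt_of_le hz.2 hxy⟩) (finite_sub S y)

/-- enumeration of an infinite set -/
noncomputable def enum (S : Set ℕ) : ℕ → ℕ := Nat.nth (· ∈ S)

lemma enum_mem {S : Set ℕ} (hS : S.Infinite) (j : ℕ) : enum S j ∈ S :=
  Nat.nth_mem_of_infinite hS j

lemma enum_strictMono {S : Set ℕ} (hS : S.Infinite) : StrictMono (enum S) :=
  Nat.nth_strictMono hS

lemma setIdx_enum {S : Set ℕ} (hS : S.Infinite) (j : ℕ) : setIdx S (enum S j) = j := by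
  rw [setIdx_eq_count]
  exact Nat.count_nth_of_infinite (p := (· ∈ S)) hS j

lemma enum_setIdx {S : Set ℕ} {x : ℕ} (hx : x ∈ S) : enum S (setIdx S x) = x := by
  rw [setIdx_eq_count]
  exact Nat.nth_count hx

lemma self_le_enum {S : Set ℕ} (hS : S.Infinite) (j : ℕ) : j ≤ enum S j :=
  (enum_strictMono hS).le_apply

/-- index within range of a strictly monotone function -/
lemma setIdx_range {f : ℕ → ℕ} (hf : StrictMono f) (j : ℕ) :
    setIdx (Set.range f) (f j) = j := by
  have : {y ∈ Set.range f | y < f j} = f '' Set.Iio j := by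
    ext y
    constructor
    · rintro ⟨⟨i, rfl⟩, hlt⟩
      exact ⟨i, hf.lt_iff_lt.1 hlt, rfl⟩
    · rintro ⟨i, hi, rfl⟩
      exact ⟨⟨i, rfl⟩, hf hi⟩
  rw [setIdx, this, Set.ncard_image_of_injective _ hf.injective]
  have : Set.Iio j = ↑(Finset.range j) := by ext; simp
  rw [this, Set.ncard_coe_finset, Finset.card_range]

lemma mem_sliceMod_iff {n : ℕ} {S : Set ℕ} {x i : ℕ} :
    x ∈ sliceMod n S i ↔ x ∈ S ∧ setIdx S x % n = i := Iff.rfl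

end L17

section PartB
open L17
attribute [local instance] Classical.propDecidable

variable {n : ℕ}

/-- slice-subset relation: clause 4 of `QLE`. -/
def sub4 (n : ℕ) (Z D : Set ℕ) : Prop := ∀ i < n, sliceMod n Z i ⊆ sliceMod n D i

lemma sub4_of (hZD : Z ⊆ D) (hidx : ∀ x ∈ Z, setIdx Z x % n = setIdx D x % n) :
    sub4 n Z D := by
  intro i _ x hx
  exact ⟨hZD hx.1, by rw [← hidx x hx.1]; exact hx.2⟩

lemma sub4_dest (hn : 0 < n) (h : sub4 n Z D) :
    Z ⊆ D ∧ ∀ x ∈ Z, setIdx Z x % n = setIdx D x % n := by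
  constructor
  · intro x hx
    exact (h _ (Nat.mod_lt _ hn) ⟨hx, rfl⟩).1
  · intro x hx
    exact ((h _ (Nat.mod_lt _ hn) ⟨hx, rfl⟩).2).symm

lemma sub4_trans (h1 : sub4 n Z D) (h2 : sub4 n D E) : sub4 n Z E :=
  fun i hi => (h1 i hi).trans (h2 i hi)

lemma sub4_refl (Z : Set ℕ) : sub4 n Z Z := fun _ _ _ hx => hx

variable (p : QCond n)

/-- `S` is an aligned subset of `p.A` : indices of elements agree mod `n`. -/
def aligned (S : Set ℕ) : Prop :=
  S ⊆ p.A ∧ ∀ x ∈ S, setIdx S x % n = setIdx p.A x % n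

lemma aligned_base : aligned p p.A := ⟨subset_rfl, fun _ _ => rfl⟩

variable {p}

lemma aligned_sub4 (hS : aligned p S) (hZ : aligned p Z) (hZS : Z ⊆ S) : sub4 n Z S :=
  sub4_of hZS (fun x hx => by rw [hZ.2 x hx, hS.2 x (hZS hx)])

lemma sub4_aligned (hn : 0 < n) (hS : aligned p S) (h : sub4 n Z S) :
    Z ⊆ S ∧ aligned p Z := by
  obtain ⟨h1, h2⟩ := sub4_dest hn h
  exact ⟨h1, fun x hx => h1 hx |> hS.1, fun x hx => by rw [h2 x hx, hS.2 x (h1 hx)]⟩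

lemma aligned_range {f : ℕ → ℕ} (hf : StrictMono f) (hmem : ∀ j, f j ∈ p.A)
    (hph : ∀ j, setIdx p.A (f j) % n = j % n) : aligned p (Set.range f) := by
  constructor
  · rintro x ⟨j, rfl⟩; exact hmem j
  · rintro x ⟨j, rfl⟩
    rw [setIdx_range hf, hph j]

/-- Cutting an aligned set above a bound, at an index divisible by `n`. -/
noncomputable def cutAbove (n : ℕ) (S : Set ℕ) (b : ℕ) : Set ℕ :=
  Set.range (fun t => enum S (n * (b + 1) + t))

lemma cutAbove_strictMono (hS : S.Infinite) :
    StrictMono (fun t => enum S (n * (b + 1) + t)) :=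
  fun _ _ hlt => enum_strictMono hS (by omega)

lemma cutAbove_subset (hS : S.Infinite) : cutAbove n S b ⊆ S := by
  rintro x ⟨t, rfl⟩; exact enum_mem hS _

lemma cutAbove_infinite (hS : S.Infinite) : (cutAbove n S b).Infinite :=
  Set.infinite_range_of_injective (cutAbove_strictMono hS).injective

lemma cutAbove_gt (hn : 0 < n) (hS : S.Infinite) : ∀ y ∈ cutAbove n S b, b < y := by
  rintro y ⟨t, rfl⟩
  dsimp only
  have h1 : n * (b + 1) + t ≤ enum S (n * (b + 1) + t) := self_le_enum hS _
  have : b + 1 ≤ n * (b + 1) := Nat.le_mul_of_pos_left _ hn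
  omega

lemma cutAbove_aligned (hn : 0 < n) (hS : aligned p S) (hSi : S.Infinite) :
    aligned p (cutAbove n S b) := by
  constructor
  · exact (cutAbove_subset hSi).trans hS.1
  · rintro x ⟨t, rfl⟩
    dsimp only
    have h0 : setIdx (cutAbove n S b) (enum S (n * (b + 1) + t)) = t :=
      setIdx_range (cutAbove_strictMono (n := n) (b := b) hSi) t
    rw [h0]
    have h1 := hS.2 _ (enum_mem hSi (n * (b + 1) + t))
    rw [setIdx_enum hSi] at h1
    rw [← h1, Nat.mul_add_mod]

lemma exists_phase (hn : 0 < n) (hS : aligned p S) (hSi : S.Infinite) (b t : ℕ) :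
    ∃ x ∈ S, b < x ∧ setIdx p.A x % n = t % n := by
  refine ⟨enum S (n * (b + 1) + t), enum_mem hSi _, ?_, ?_⟩
  · have h1 : n * (b + 1) + t ≤ enum S (n * (b + 1) + t) := self_le_enum hSi _
    have : b + 1 ≤ n * (b + 1) := Nat.le_mul_of_pos_left _ hn
    omega
  · rw [← hS.2 _ (enum_mem hSi _), setIdx_enum hSi, Nat.mul_add_mod]

/-- initial segments of finsets have stable indices -/
lemma initSeg_setIdx {w w' : Finset ℕ} (hsub : w ⊆ w')
    (habove : ∀ x ∈ w', x ∉ w → ∀ y ∈ w, y < x) {x : ℕ} (hx : x ∈ w) :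
    setIdx ↑w' x = setIdx ↑w x := by
  apply setIdx_congr
  intro y hy
  constructor
  · intro hyw'
    by_contra hyw
    exact absurd hy (not_lt.2 (habove y hyw' hyw x hx).le)
  · exact fun hyw => hsub hyw

lemma c3_of {w w' : Finset ℕ} {D : Set ℕ} (hsub : w ⊆ w')
    (habove : ∀ x ∈ w', x ∉ w → ∀ y ∈ w, y < x)
    (h : ∀ x ∈ w', x ∉ w → x ∈ D ∧ setIdx D x % n = setIdx (↑w' : Set ℕ) x % n) :
    ∀ i < n, sliceMod n (↑w') i \ sliceMod n (↑w) i ⊆ sliceMod n D i := by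
  intro i _ x hx
  obtain ⟨⟨hxw', hxi⟩, hxns⟩ := hx
  have hxnw : x ∉ w := by
    intro hxw
    exact hxns ⟨hxw, by rw [← initSeg_setIdx hsub habove hxw]; exact hxi⟩
  obtain ⟨hxD, hidx⟩ := h x hxw' hxnw
  exact ⟨hxD, by rw [hidx]; exact hxi⟩

lemma c3_dest (hn : 0 < n) {w w' : Finset ℕ} {D : Set ℕ} (hsub : w ⊆ w')
    (habove : ∀ x ∈ w', x ∉ w → ∀ y ∈ w, y < x)
    (h3 : ∀ i < n, sliceMod n (↑w') i \ sliceMod n (↑w) i ⊆ sliceMod n D i) :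
    ∀ x ∈ w', x ∉ w → x ∈ D ∧ setIdx D x % n = setIdx (↑w' : Set ℕ) x % n := by
  intro x hxw' hxnw
  have hx : x ∈ sliceMod n (↑w') (setIdx ↑w' x % n) \ sliceMod n (↑w) (setIdx ↑w' x % n) := by
    refine ⟨⟨hxw', rfl⟩, ?_⟩
    intro hc
    exact hxnw hc.1
  have := h3 _ (Nat.mod_lt _ hn) hx
  exact ⟨this.1, this.2⟩

lemma QLE_mk {w w' : Finset ℕ} {Z D : Set ℕ} {hZ : Z.Infinite} {hD : D.Infinite}
    (hsub : w ⊆ w') (habove : ∀ x ∈ w', x ∉ w → ∀ y ∈ w, y < x)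
    (h3 : ∀ x ∈ w', x ∉ w → x ∈ D ∧ setIdx D x % n = setIdx (↑w' : Set ℕ) x % n)
    (h4 : sub4 n Z D) :
    QLE n ⟨w', Z, hZ⟩ ⟨w, D, hD⟩ :=
  ⟨hsub, habove, c3_of hsub habove h3, h4⟩

lemma QLE_dest (hn : 0 < n) {s q : QCond n} (h : QLE n s q) :
    q.w ⊆ s.w ∧ (∀ x ∈ s.w, x ∉ q.w → ∀ y ∈ q.w, y < x) ∧
    (∀ x ∈ s.w, x ∉ q.w → x ∈ q.A ∧ setIdx q.A x % n = setIdx (↑s.w : Set ℕ) x % n) ∧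
    sub4 n s.A q.A :=
  ⟨h.1, h.2.1, c3_dest hn h.1 h.2.1 h.2.2.1, h.2.2.2⟩

lemma QLE_trans (hn : 0 < n) {t s q : QCond n} (hts : QLE n t s) (hsq : QLE n s q) :
    QLE n t q := by
  obtain ⟨hsub1, hab1, h31, h41⟩ := QLE_dest hn hts
  obtain ⟨hsub2, hab2, h32, h42⟩ := QLE_dest hn hsq
  have hsub : q.w ⊆ t.w := hsub2.trans hsub1
  have hab : ∀ x ∈ t.w, x ∉ q.w → ∀ y ∈ q.w, y < x := by
    intro x hx hxq y hy
    by_cases hxs : x ∈ s.w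
    · exact hab2 x hxs hxq y hy
    · exact hab1 x hx hxs y (hsub2 hy)
  refine ⟨hsub, hab, c3_of hsub hab ?_, sub4_trans h41 h42⟩
  intro x hx hxq
  by_cases hxs : x ∈ s.w
  · obtain ⟨hxA, hidx⟩ := h32 x hxs hxq
    refine ⟨hxA, ?_⟩
    rw [hidx, initSeg_setIdx hsub1 hab1 hxs]
  · obtain ⟨hxA, hidx⟩ := h31 x hx hxs
    obtain ⟨hAsub, hAidx⟩ := sub4_dest hn h42
    exact ⟨hAsub hxA, by rw [← hAidx x hxA, hidx]⟩

end PartB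

section PartC
open L17
attribute [local instance] Classical.propDecidable

/-- generic dependent-choice sequence builder -/
lemma seqBuilder {α : Type} (Inv : ℕ → α → Prop) (Rel : ℕ → α → α → Prop)
    (init : ∃ a, Inv 0 a)
    (step : ∀ m a, Inv m a → ∃ b, Inv (m + 1) b ∧ Rel m a b) :
    ∃ f : ℕ → α, (∀ m, Inv m (f m)) ∧ (∀ m, Rel m (f m) (f (m + 1))) := by
  let F : ∀ m : ℕ, {a // Inv m a} := fun m =>
    Nat.rec ⟨Classical.choose init, Classical.choose_spec init⟩
      (fun m prev => ⟨Classical.choose (step m prev.1 prev.2),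
        (Classical.choose_spec (step m prev.1 prev.2)).1⟩) m
  refine ⟨fun m => (F m).1, fun m => (F m).2, fun m => ?_⟩
  exact (Classical.choose_spec (step m (F m).1 (F m).2)).2

lemma chain_subset {Y : ℕ → Set ℕ} (h : ∀ m, Y (m + 1) ⊆ Y m) :
    ∀ i j, i ≤ j → Y j ⊆ Y i := by
  intro i j hij
  induction j with
  | zero => have : i = 0 := Nat.le_zero.1 hij; subst this; exact subset_rfl
  | succ j ih =>
    rcases Nat.lt_or_ge i (j + 1) with hc | hc
    · exact (h j).trans (ih (by omega))
    · have : i = j + 1 := by omega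
      subst this; exact subset_rfl

lemma setIdx_eq_card {S : Set ℕ} {x : ℕ} {v : Finset ℕ}
    (hv : {y ∈ S | y < x} = ↑v) : setIdx S x = v.card := by
  rw [setIdx, hv, Set.ncard_coe_finset]

/-- context bundling the hypotheses of the theorem -/
structure Ctx (n : ℕ) where
  hn : 0 < n
  p : QCond n
  g : ℕ → ℕ
  A : ℕ → Set (QCond n)
  h : ℕ → QCond n → ℕ
  hanti : ∀ m : ℕ, ∀ r ∈ A m, ∀ s ∈ A m, r ≠ s → ¬ QCompat n r s
  hmax : ∀ m : ℕ, ∀ r : QCond n, QLE n r p → ∃ s ∈ A m, QCompat n r s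
  hval : ∀ m : ℕ, ∀ r ∈ A m, h m r < g m

variable {n : ℕ} (C : Ctx n)

/-- a legal stem: end-extension of `p.w` by elements of `p.A` at aligned positions -/
def Ctx.Leg (u : Finset ℕ) : Prop :=
  C.p.w ⊆ u ∧ ∀ x ∈ u, x ∉ C.p.w →
    x ∈ C.p.A ∧ (∀ y ∈ C.p.w, y < x) ∧
      setIdx (↑u : Set ℕ) x % n = setIdx C.p.A x % n

/-- `u` accepts within `Y`: some aligned infinite `Z ⊆ Y` decides the value of
the `m`-th антichain on conditions compatible with `(u, Z)`. -/
def Ctx.Acc (m : ℕ) (u : Finset ℕ) (Y : Set ℕ) : Prop :=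
  ∃ Z, Z ⊆ Y ∧ aligned C.p Z ∧ ∃ hZ : Z.Infinite, ∃ k, k < C.g m ∧
    ∀ r ∈ C.A m, QCompat n r ⟨u, Z, hZ⟩ → C.h m r = k

lemma Ctx.acc_mono {m : ℕ} {u : Finset ℕ} {Y Y' : Set ℕ} (hYY : Y ⊆ Y')
    (ha : C.Acc m u Y) : C.Acc m u Y' := by
  obtain ⟨Z, h1, h2⟩ := ha
  exact ⟨Z, h1.trans hYY, h2⟩

/-- the antichain trick: any condition below a member of the antichain decides. -/
lemma Ctx.dec_of_le {m : ℕ} {r : QCond n} (hr : r ∈ C.A m) {s : QCond n}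
    (hsr : QLE n s r) : ∀ r' ∈ C.A m, QCompat n r' s → C.h m r' = C.h m r := by
  intro r' hr' ⟨t, htr', hts⟩
  by_cases he : r' = r
  · rw [he]
  · exact absurd ⟨t, htr', QLE_trans C.hn hts hsr⟩ (C.hanti m r' hr' r hr he)

lemma Ctx.acc_of_le {m : ℕ} {u : Finset ℕ} {Y Z : Set ℕ} {r : QCond n}
    (hZY : Z ⊆ Y) (hal : aligned C.p Z) (hZi : Z.Infinite)
    (hr : r ∈ C.A m) (hle : QLE n ⟨u, Z, hZi⟩ r) : C.Acc m u Y :=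
  ⟨Z, hZY, hal, hZi, C.h m r, C.hval m r hr, C.dec_of_le hr hle⟩

lemma Ctx.leg_le {u : Finset ℕ} (hu : C.Leg u) {Z : Set ℕ}
    (hal : aligned C.p Z) (hZi : Z.Infinite) : QLE n ⟨u, Z, hZi⟩ C.p := by
  refine QLE_mk hu.1 (fun x hx hxp y hy => ((hu.2 x hx hxp).2.1 y hy)) ?_
    (aligned_sub4 (aligned_base C.p) hal hal.1)
  intro x hx hxp
  obtain ⟨h1, _, h3⟩ := hu.2 x hx hxp
  exact ⟨h1, h3.symm⟩

/-- pure shrinking of the reservoir gives an extension -/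
lemma QLE_pure {w : Finset ℕ} {Z D : Set ℕ} {hZ : Z.Infinite} {hD : D.Infinite}
    (h4 : sub4 n Z D) : QLE n ⟨w, Z, hZ⟩ ⟨w, D, hD⟩ :=
  QLE_mk subset_rfl (fun x hx hxp _ hy => absurd hx hxp)
    (fun x hx hxp => absurd hx hxp) h4

lemma setIdx_insert_top {u : Finset ℕ} {x : ℕ} (hgt : ∀ y ∈ u, y < x) :
    setIdx (↑(insert x u) : Set ℕ) x = u.card := by
  apply setIdx_eq_card
  ext y
  simp only [Set.mem_setOf_eq, Finset.coe_insert, Set.mem_insert_iff, Finset.mem_coe]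
  constructor
  · rintro ⟨hy | hy, hlt⟩
    · omega
    · exact hy
  · intro hy
    exact ⟨Or.inr hy, hgt y hy⟩

lemma Ctx.leg_insert {u : Finset ℕ} (hu : C.Leg u) {x : ℕ} (hxA : x ∈ C.p.A)
    (hgt : ∀ y ∈ u, y < x) (hph : setIdx C.p.A x % n = u.card % n) :
    C.Leg (insert x u) := by
  have habove : ∀ z ∈ insert x u, z ∉ u → ∀ y ∈ u, y < z := by
    intro z hz hznu y hy
    rcases Finset.mem_insert.1 hz with rfl | hz'
    · exact hgt y hy
    · exact absurd hz' hznu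
  constructor
  · exact hu.1.trans (Finset.subset_insert _ _)
  · intro z hz hznp
    rcases Finset.mem_insert.1 hz with rfl | hz'
    · refine ⟨hxA, fun y hy => hgt y (hu.1 hy), ?_⟩
      rw [setIdx_insert_top hgt, ← hph]
    · obtain ⟨h1, h2, h3⟩ := hu.2 z hz' hznp
      refine ⟨h1, h2, ?_⟩
      rw [initSeg_setIdx (Finset.subset_insert _ _) habove hz', h3]

end PartC

section PartD
open L17
attribute [local instance] Classical.propDecidable

variable {n : ℕ} (C : Ctx n)

/-- Lemma B: if `u` rejects within `Y`, then on a suitable shrink `Y'` every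
one-step legal extension of `u` also rejects. -/
lemma Ctx.lemB {m : ℕ} {u : Finset ℕ} {Y : Set ℕ}
    (hleg : C.Leg u) (hal : aligned C.p Y) (hYi : Y.Infinite)
    (hbd : ∀ y ∈ Y, ∀ z ∈ u, z < y) (hrej : ¬ C.Acc m u Y) :
    ∃ Y', Y' ⊆ Y ∧ aligned C.p Y' ∧ Y'.Infinite ∧
      ∀ x ∈ Y', setIdx C.p.A x % n = u.card % n →
        ¬ C.Acc m (insert x u) {y ∈ Y' | x < y} := by
  by_contra h0
  have hcon : ∀ Y', Y' ⊆ Y → aligned C.p Y' → Y'.Infinite →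
      ∃ x ∈ Y', setIdx C.p.A x % n = u.card % n ∧
        C.Acc m (insert x u) {y ∈ Y' | x < y} := by
    intro Y' h1 h2 h3
    by_contra h4
    push_neg at h4
    exact h0 ⟨Y', h1, h2, h3, fun x hx hph => (h4 x hx hph)⟩
  clear h0
  -- build the diagonal chain (x i, k i, Z i)
  set Inv : ℕ → ℕ × ℕ × Set ℕ → Prop := fun _ st =>
    st.1 ∈ Y ∧ (∀ z ∈ u, z < st.1) ∧ setIdx C.p.A st.1 % n = u.card % n ∧
    st.2.2 ⊆ Y ∧ aligned C.p st.2.2 ∧ st.2.2.Infinite ∧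
    (∀ y ∈ st.2.2, st.1 < y) ∧ st.2.1 < C.g m ∧
    ∃ hZ : st.2.2.Infinite,
      ∀ r ∈ C.A m, QCompat n r ⟨insert st.1 u, st.2.2, hZ⟩ → C.h m r = st.2.1
    with hInv
  set Rel : ℕ → ℕ × ℕ × Set ℕ → ℕ × ℕ × Set ℕ → Prop := fun _ st st' =>
    st.1 < st'.1 ∧ st'.1 ∈ st.2.2 ∧ st'.2.2 ⊆ st.2.2 with hRel
  have hmk : ∀ (W : Set ℕ), W ⊆ Y → aligned C.p W → W.Infinite →
      ∃ st : ℕ × ℕ × Set ℕ, Inv 0 st ∧ st.1 ∈ W ∧ st.2.2 ⊆ W := by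
    intro W h1 h2 h3
    obtain ⟨x, hxW, hph, hacc⟩ := hcon W h1 h2 h3
    obtain ⟨Z, hZsub, hZal, hZi, k, hk, hdec⟩ := hacc
    have hZW : Z ⊆ W := fun y hy => (hZsub hy).1
    have hZgt : ∀ y ∈ Z, x < y := fun y hy => (hZsub hy).2
    refine ⟨(x, k, Z), ⟨h1 hxW, fun z hz => hbd x (h1 hxW) z hz, hph, hZW.trans h1,
      hZal, hZi, hZgt, hk, hZi, hdec⟩, hxW, hZW⟩
  obtain ⟨f, hfInv, hfRel⟩ := seqBuilder Inv Rel
    (by obtain ⟨st, h1, _⟩ := hmk Y subset_rfl hal hYi; exact ⟨st, h1⟩)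
    (by
      intro i st hst
      obtain ⟨st', h1, h2, h3⟩ := hmk st.2.2 hst.2.2.2.1 hst.2.2.2.2.1 hst.2.2.2.2.2.1
      refine ⟨st', h1, hst.2.2.2.2.2.2.1 st'.1 h2, h2, h3⟩)
  set xs : ℕ → ℕ := fun i => (f i).1 with hxs
  set ks : ℕ → ℕ := fun i => (f i).2.1 with hks
  set Zs : ℕ → Set ℕ := fun i => (f i).2.2 with hZs
  have hZchain : ∀ i j, i ≤ j → Zs j ⊆ Zs i :=
    chain_subset (fun i => (hfRel i).2.2)
  have hxmono : StrictMono xs := strictMono_nat_of_lt_succ (fun i => (hfRel i).1)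
  have hxZ : ∀ i j, i < j → xs j ∈ Zs i := by
    intro i j hij
    exact hZchain i (j - 1) (by omega)
      (by have := (hfRel (j-1)).2.1; rwa [show j - 1 + 1 = j by omega] at this)
  -- pigeonhole: one value recurs
  have pig : ∃ k', k' < C.g m ∧ ∀ N, ∃ i, N ≤ i ∧ ks i = k' := by
    by_contra hp
    push_neg at hp
    have hp' : ∀ k', ∃ N, k' < C.g m → ∀ i, N ≤ i → ks i ≠ k' := by
      intro k'
      by_cases hk : k' < C.g m
      · obtain ⟨N, hN⟩ := hp k' hk
        exact ⟨N, fun _ i hi => hN i hi⟩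
      · exact ⟨0, fun hc => absurd hc hk⟩
    choose Nf hNf using hp'
    set Nb := (Finset.range (C.g m)).sup Nf with hNb
    have h1 : ks Nb < C.g m := (hfInv Nb).2.2.2.2.2.2.2.1
    exact hNf (ks Nb) h1 Nb
      (Finset.le_sup (Finset.mem_range.2 h1)) rfl
  obtain ⟨kst, hkst, hrec⟩ := pig
  -- build the homogeneous diagonal set
  have mkNext : ∀ (t b i : ℕ), ∃ z i', i ≤ i' ∧ z ∈ Zs i ∧ b < z ∧
      setIdx C.p.A z % n = t % n ∧
      ((t % n = u.card % n ∧ z = xs i' ∧ ks i' = kst) ∨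
        (¬ t % n = u.card % n ∧ z ∈ Zs i')) := by
    intro t b i
    by_cases hc : t % n = u.card % n
    · obtain ⟨i', hi', hki'⟩ := hrec (max (i + 1) (b + 1))
      have hbx : b < xs i' := by
        have h1 : i' ≤ xs i' := hxmono.le_apply
        omega
      refine ⟨xs i', i', by omega, hxZ i i' (by omega), hbx, ?_, Or.inl ⟨hc, rfl, hki'⟩⟩
      rw [(hfInv i').2.2.1, ← hc]
    · obtain ⟨z, hz, hbz, hph⟩ := exists_phase C.hn (hfInv i).2.2.2.2.1
        (hfInv i).2.2.2.2.2.1 b t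
      exact ⟨z, i, le_rfl, hz, hbz, hph, Or.inr ⟨hc, hz⟩⟩
  set Inv2 : ℕ → ℕ × ℕ → Prop := fun t st =>
    st.1 ∈ Y ∧ (∀ w ∈ u, w < st.1) ∧ setIdx C.p.A st.1 % n = t % n ∧
      ((t % n = u.card % n ∧ st.1 = xs st.2 ∧ ks st.2 = kst) ∨
        (¬ t % n = u.card % n ∧ st.1 ∈ Zs st.2)) with hInv2
  set Rel2 : ℕ → ℕ × ℕ → ℕ × ℕ → Prop := fun _ st st' =>
    st.1 < st'.1 ∧ st.2 ≤ st'.2 ∧ st'.1 ∈ Zs st.2 with hRel2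
  have hZY : ∀ i, Zs i ⊆ Y := fun i => (hfInv i).2.2.2.1
  obtain ⟨fz, hfz, hfzRel⟩ := seqBuilder Inv2 Rel2
    (by
      obtain ⟨z, i', _, hzZ, _, hph, hd⟩ := mkNext 0 0 0
      exact ⟨(z, i'), hZY 0 hzZ, fun w hw => hbd z (hZY 0 hzZ) w hw, hph, hd⟩)
    (by
      intro t st hst
      obtain ⟨z, i', hii', hzZ, hbz, hph, hd⟩ := mkNext (t + 1) st.1 st.2
      exact ⟨(z, i'), ⟨hZY st.2 hzZ, fun w hw => hbd z (hZY st.2 hzZ) w hw, hph, hd⟩,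
        hbz, hii', hzZ⟩)
  set zs : ℕ → ℕ := fun t => (fz t).1 with hzsdef
  set is : ℕ → ℕ := fun t => (fz t).2 with hisdef
  have hzmono : StrictMono zs := strictMono_nat_of_lt_succ (fun t => (hfzRel t).1)
  have himono : Monotone is := monotone_nat_of_le_succ (fun t => (hfzRel t).2.1)
  have hforward : ∀ t t', t < t' → zs t' ∈ Zs (is t) := by
    intro t t' htt'
    have h1 : zs t' ∈ Zs (is (t' - 1)) := by
      have := (hfzRel (t' - 1)).2.2
      rwa [show t' - 1 + 1 = t' by omega] at this
    exact hZchain (is t) (is (t' - 1)) (himono (by omega)) h1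
  have hzsY : ∀ t, zs t ∈ Y := fun t => (hfz t).1
  have hzsAl : aligned C.p (Set.range zs) :=
    aligned_range hzmono (fun t => hal.1 (hzsY t)) (fun t => (hfz t).2.2.1)
  have hzsInf : (Set.range zs).Infinite := Set.infinite_range_of_injective hzmono.injective
  -- the diagonal set witnesses acceptance of u : contradiction
  refine hrej ⟨Set.range zs, ?_, hzsAl, hzsInf, kst, hkst, ?_⟩
  · rintro y ⟨t, rfl⟩; exact hzsY t
  intro r hr hcompat
  obtain ⟨s, hsr, hsu⟩ := hcompat
  obtain ⟨sw, sA, sAinf⟩ := s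
  obtain ⟨h1, h2, h3, h4⟩ := QLE_dest C.hn hsu
  simp only at h1 h2 h3 h4 hsr
  obtain ⟨hsAsub, hsAal⟩ := sub4_aligned C.hn hzsAl h4
  -- key property of slots with the right phase
  have KP : ∀ t₀, t₀ % n = u.card % n →
      zs t₀ = xs (is t₀) ∧ ks (is t₀) = kst := by
    intro t₀ hph
    rcases (hfz t₀).2.2.2 with hL | hR
    · exact ⟨hL.2.1, hL.2.2⟩
    · exact absurd hph hR.1
  by_cases hcase : ∀ x ∈ sw, x ∈ u
  · -- pure case: sw = u, extend the stem by one element of sA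
    have hswu : sw = u := Finset.Subset.antisymm (fun x hx => hcase x hx) h1
    subst hswu
    obtain ⟨x', hx'A, hx'gt, hx'ph⟩ :=
      exists_phase C.hn hsAal sAinf (sw.sup id) sw.card
    have hgtu : ∀ y ∈ sw, y < x' := by
      intro y hy
      have : y ≤ sw.sup id := Finset.le_sup (f := id) hy
      omega
    have hx'Z : x' ∈ Set.range zs := hsAsub hx'A
    obtain ⟨t₀, ht₀⟩ := hx'Z
    have ht₀ph : t₀ % n = sw.card % n := by
      have hA : setIdx C.p.A (zs t₀) % n = t₀ % n := (hfz t₀).2.2.1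
      rw [ht₀, hx'ph] at hA
      omega
    obtain ⟨hxeq, hkeq⟩ := KP t₀ ht₀ph
    have hx'xs : x' = xs (is t₀) := ht₀ ▸ hxeq
    have hcutZ : cutAbove n sA x' ⊆ Zs (is t₀) := by
      intro y hy
      have hy1 : y ∈ sA := cutAbove_subset sAinf hy
      have hy2 : x' < y := cutAbove_gt C.hn sAinf y hy
      obtain ⟨t'', ht''⟩ := hsAsub hy1
      refine ht'' ▸ hforward t₀ t'' ?_
      rw [← ht'', ← ht₀] at hy2
      exact hzmono.lt_iff_lt.1 hy2
    obtain ⟨hZi', hdec⟩ := (hfInv (is t₀)).2.2.2.2.2.2.2.2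
    have hs₂s : QLE n ⟨insert x' sw, cutAbove n sA x', cutAbove_infinite sAinf⟩
        ⟨sw, sA, sAinf⟩ := by
      refine QLE_mk (Finset.subset_insert _ _) ?_ ?_
        (aligned_sub4 hsAal (cutAbove_aligned C.hn hsAal sAinf) (cutAbove_subset sAinf))
      · intro z hz hznu y hy
        rcases Finset.mem_insert.1 hz with rfl | hz'
        · exact hgtu y hy
        · exact absurd hz' hznu
      · intro z hz hznu
        rcases Finset.mem_insert.1 hz with hz0 | hz'
        · subst hz0
          refine ⟨hx'A, ?_⟩
          rw [setIdx_insert_top hgtu, hsAal.2 z hx'A, hx'ph]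
        · exact absurd hz' hznu
    have hcpt : QCompat n r ⟨insert (xs (is t₀)) sw, Zs (is t₀), hZi'⟩ := by
      refine ⟨⟨insert x' sw, cutAbove n sA x', cutAbove_infinite sAinf⟩,
        QLE_trans C.hn hs₂s hsr, ?_⟩
      rw [← hx'xs]
      exact QLE_pure (aligned_sub4 (hfInv (is t₀)).2.2.2.2.1
        (cutAbove_aligned C.hn hsAal sAinf) hcutZ)
    rw [hdec r hr hcpt]
    exact hkeq
  · -- the stem of s already extends u : factor through a decided extension
    push_neg at hcase
    obtain ⟨x₀, hx₀sw, hx₀nu⟩ := hcase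
    have hne : (sw \ u).Nonempty := ⟨x₀, Finset.mem_sdiff.2 ⟨hx₀sw, hx₀nu⟩⟩
    set x' := (sw \ u).min' hne with hx'def
    have hx'mem := Finset.min'_mem (sw \ u) hne
    have hx'sw : x' ∈ sw := (Finset.mem_sdiff.1 hx'mem).1
    have hx'nu : x' ∉ u := (Finset.mem_sdiff.1 hx'mem).2
    have hgtu : ∀ y ∈ u, y < x' := h2 x' hx'sw hx'nu
    have hminle : ∀ y ∈ sw, y ∉ u → x' ≤ y := fun y hy hynu =>
      Finset.min'_le _ _ (Finset.mem_sdiff.2 ⟨hy, hynu⟩)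
    have hidxsw : setIdx (↑sw : Set ℕ) x' = u.card := by
      apply setIdx_eq_card
      ext y
      simp only [Set.mem_setOf_eq, Finset.mem_coe, Finset.coe_sort_coe]
      constructor
      · rintro ⟨hysw, hylt⟩
        by_contra hynu
        exact absurd hylt (not_lt.2 (hminle y hysw hynu))
      · intro hyu
        exact ⟨h1 hyu, hgtu y hyu⟩
    obtain ⟨hx'Z, hx'idx⟩ := h3 x' hx'sw hx'nu
    obtain ⟨t₀, ht₀⟩ := hx'Z
    have hidxt₀ : setIdx (Set.range zs) x' = t₀ := ht₀ ▸ setIdx_range hzmono t₀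
    have ht₀ph : t₀ % n = u.card % n := by
      rw [hidxt₀] at hx'idx
      rw [hidxsw] at hx'idx
      omega
    obtain ⟨hxeq, hkeq⟩ := KP t₀ ht₀ph
    have hx'xs : x' = xs (is t₀) := ht₀ ▸ hxeq
    have habove' : ∀ y ∈ sw, y ∉ insert x' u → ∀ z ∈ insert x' u, z < y := by
      intro y hy hyni z hz
      have hynu : y ∉ u := fun hc => hyni (Finset.mem_insert_of_mem hc)
      have hynx : y ≠ x' := fun hc => hyni (hc ▸ Finset.mem_insert_self _ _)
      have hyx : x' < y := lt_of_le_of_ne (hminle y hy hynu) (Ne.symm hynx)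
      rcases Finset.mem_insert.1 hz with rfl | hz'
      · exact hyx
      · exact lt_trans (hgtu z hz') hyx
    have hfwd : ∀ y, y ∈ Set.range zs → x' < y → y ∈ Zs (is t₀) := by
      intro y hyZ hyx
      obtain ⟨t'', ht''⟩ := hyZ
      refine ht'' ▸ hforward t₀ t'' ?_
      rw [← ht'', ← ht₀] at hyx
      exact hzmono.lt_iff_lt.1 hyx
    have hcutZ : cutAbove n sA x' ⊆ Zs (is t₀) := by
      intro y hy
      exact hfwd y (hsAsub (cutAbove_subset sAinf hy)) (cutAbove_gt C.hn sAinf y hy)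
    obtain ⟨hZi', hdec⟩ := (hfInv (is t₀)).2.2.2.2.2.2.2.2
    have hal' := (hfInv (is t₀)).2.2.2.2.1
    have hs₄s : QLE n ⟨sw, cutAbove n sA x', cutAbove_infinite sAinf⟩ ⟨sw, sA, sAinf⟩ :=
      QLE_pure (aligned_sub4 hsAal (cutAbove_aligned C.hn hsAal sAinf)
        (cutAbove_subset sAinf))
    have hs₄i : QLE n ⟨sw, cutAbove n sA x', cutAbove_infinite sAinf⟩
        ⟨insert x' u, Zs (is t₀), hZi'⟩ := by
      refine QLE_mk ?_ habove' ?_ (aligned_sub4 hal'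
        (cutAbove_aligned C.hn hsAal sAinf) hcutZ)
      · intro z hz
        rcases Finset.mem_insert.1 hz with rfl | hz'
        · exact hx'sw
        · exact h1 hz'
      · intro y hy hyni
        have hynu : y ∉ u := fun hc => hyni (Finset.mem_insert_of_mem hc)
        have hynx : y ≠ x' := fun hc => hyni (hc ▸ Finset.mem_insert_self _ _)
        have hyx : x' < y := lt_of_le_of_ne (hminle y hy hynu) (Ne.symm hynx)
        obtain ⟨hyZ, hyidx⟩ := h3 y hy hynu
        have hyZi : y ∈ Zs (is t₀) := hfwd y hyZ hyx
        refine ⟨hyZi, ?_⟩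
        rw [hal'.2 y hyZi, ← hzsAl.2 y hyZ, hyidx]
    have hcpt : QCompat n r ⟨insert (xs (is t₀)) u, Zs (is t₀), hZi'⟩ := by
      refine ⟨⟨sw, cutAbove n sA x', cutAbove_infinite sAinf⟩,
        QLE_trans C.hn hs₄s hsr, ?_⟩
      rw [← hx'xs]
      exact hs₄i
    rw [hdec r hr hcpt]
    exact hkeq

end PartD

section PartE
open L17
attribute [local instance] Classical.propDecidable

variable {n : ℕ} (C : Ctx n)

lemma setIdx_erase_top {u : Finset ℕ} {x : ℕ} (hx : x ∈ u)
    (htop : ∀ y ∈ u, y ≠ x → y < x) : setIdx (↑u : Set ℕ) x = (u.erase x).card := by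
  apply setIdx_eq_card
  ext y
  simp only [Set.mem_setOf_eq, Finset.mem_coe, Finset.mem_erase]
  constructor
  · rintro ⟨hyu, hlt⟩
    exact ⟨by omega, hyu⟩
  · rintro ⟨hne, hyu⟩
    exact ⟨hyu, htop y hyu hne⟩

lemma Ctx.leg_erase_top {u : Finset ℕ} {x : ℕ} (hleg : C.Leg u) (hx : x ∈ u)
    (htop : ∀ y ∈ u, y ≠ x → y < x) (hxp : x ∉ C.p.w) :
    C.Leg (u.erase x) ∧ setIdx C.p.A x % n = (u.erase x).card % n := by
  have hsub : u.erase x ⊆ u := Finset.erase_subset _ _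
  have habove : ∀ z ∈ u, z ∉ u.erase x → ∀ y ∈ u.erase x, y < z := by
    intro z hz hzne y hy
    have : z = x := by
      by_contra hcon
      exact hzne (Finset.mem_erase.2 ⟨hcon, hz⟩)
    subst this
    exact htop y (hsub hy) (Finset.mem_erase.1 hy).1
  constructor
  · constructor
    · intro y hy
      refine Finset.mem_erase.2 ⟨?_, hleg.1 hy⟩
      intro hc
      exact hxp (hc ▸ hy)
    · intro z hz hzp
      obtain ⟨h1, h2, h3⟩ := hleg.2 z (hsub hz) hzp
      refine ⟨h1, h2, ?_⟩
      rw [← initSeg_setIdx hsub habove hz, h3]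
  · have h3 := (hleg.2 x hx hxp).2.2
    rw [setIdx_erase_top hx htop] at h3
    omega

/-- folding Lemma B over a finite list of stems -/
lemma Ctx.foldLemB {m : ℕ} (L : List (Finset ℕ)) {Y : Set ℕ}
    (hal : aligned C.p Y) (hYi : Y.Infinite) :
    ∃ Y', Y' ⊆ Y ∧ aligned C.p Y' ∧ Y'.Infinite ∧
      ∀ u ∈ L, C.Leg u → (∀ y ∈ Y, ∀ z ∈ u, z < y) → ¬ C.Acc m u Y →
        ∀ x ∈ Y', setIdx C.p.A x % n = u.card % n →
          ¬ C.Acc m (insert x u) {y ∈ Y' | x < y} := by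
  induction L generalizing Y with
  | nil => exact ⟨Y, subset_rfl, hal, hYi, by simp⟩
  | cons u L ih =>
    by_cases hu : C.Leg u ∧ (∀ y ∈ Y, ∀ z ∈ u, z < y) ∧ ¬ C.Acc m u Y
    · obtain ⟨Y1, h1, h2, h3, h4⟩ := C.lemB hu.1 hal hYi hu.2.1 hu.2.2
      obtain ⟨Y', g1, g2, g3, g4⟩ := ih h2 h3
      refine ⟨Y', g1.trans h1, g2, g3, ?_⟩
      intro u' hu' hleg hbd hrej x hx hph
      rcases List.mem_cons.1 hu' with rfl | hmem
      · have hna := h4 x (g1 hx) hph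
        intro hacc
        refine hna (C.acc_mono ?_ hacc)
        intro y hy
        exact ⟨g1 hy.1, hy.2⟩
      · exact g4 u' hmem hleg (fun y hy z hz => hbd y (h1 hy) z hz)
          (fun hacc => hrej (C.acc_mono h1 hacc)) x hx hph
    · obtain ⟨Y', g1, g2, g3, g4⟩ := ih hal hYi
      refine ⟨Y', g1, g2, g3, ?_⟩
      intro u' hu' hleg hbd hrej
      rcases List.mem_cons.1 hu' with rfl | hmem
      · exact absurd ⟨hleg, hbd, hrej⟩ hu
      · exact g4 u' hmem hleg hbd hrej

end PartE

section PartF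
open L17
attribute [local instance] Classical.propDecidable

variable {n : ℕ} (C : Ctx n)

/-- Pure decision: below any legal stem `v` with aligned reservoir `Y`, some pure
shrink decides the value of the `m`-th antichain. -/
lemma Ctx.pureDecision {m : ℕ} {v : Finset ℕ} {Y : Set ℕ}
    (hlegv : C.Leg v) (hal : aligned C.p Y) (hYi : Y.Infinite)
    (hbd : ∀ y ∈ Y, ∀ z ∈ v, z < y) : C.Acc m v Y := by
  by_contra hacc
  set Inv : ℕ → (ℕ → ℕ) × Set ℕ → Prop := fun i st =>
    aligned C.p st.2 ∧ st.2.Infinite ∧ st.2 ⊆ Y ∧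
    (∀ y ∈ st.2, ∀ j < i, st.1 j < y) ∧
    (∀ j < i, st.1 j ∈ Y ∧ setIdx C.p.A (st.1 j) % n = j % n) ∧
    (∀ u : Finset ℕ, v ⊆ u → u ⊆ v ∪ (Finset.range i).image st.1 →
      C.Leg u → ¬ C.Acc m u st.2) with hInvd
  set Rel : ℕ → (ℕ → ℕ) × Set ℕ → (ℕ → ℕ) × Set ℕ → Prop := fun i st st' =>
    (∀ j < i, st'.1 j = st.1 j) ∧ st'.1 i ∈ st.2 ∧ st'.2 ⊆ st.2 with hReld
  have init : ∃ st, Inv 0 st := by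
    refine ⟨(id, Y), hal, hYi, subset_rfl, fun y _ j hj => absurd hj (Nat.not_lt_zero j),
      fun j hj => absurd hj (Nat.not_lt_zero j), ?_⟩
    intro u hvu husub hleg
    have hu : u = v := Finset.Subset.antisymm (by simpa using husub) hvu
    rw [hu]
    exact hacc
  have step : ∀ i st, Inv i st → ∃ st', Inv (i + 1) st' ∧ Rel i st st' := by
    intro i st hst
    obtain ⟨hW1, hW2, hW3, hW4, hW5, hW6⟩ := hst
    obtain ⟨Y1, f1, f2, f3, f4⟩ :=
      C.foldLemB (m := m) (v ∪ (Finset.range i).image st.1).powerset.toList hW1 hW2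
    obtain ⟨xi, hxiY1, _, hxiph⟩ := exists_phase C.hn f2 f3 0 i
    have hxiW : xi ∈ st.2 := f1 hxiY1
    have hxiY : xi ∈ Y := hW3 hxiW
    set xf : ℕ → ℕ := Function.update st.1 i xi with hxfd
    refine ⟨(xf, cutAbove n Y1 xi),
      ⟨cutAbove_aligned C.hn f2 f3, cutAbove_infinite f3,
        (cutAbove_subset f3).trans (f1.trans hW3), ?_, ?_, ?_⟩,
      fun j hj => by
        show xf j = st.1 j
        rw [hxfd, Function.update_of_ne (by omega : j ≠ i)], by
        show xf i ∈ st.2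
        rw [hxfd, Function.update_self]; exact hxiW, (cutAbove_subset f3).trans f1⟩
    · -- new elements dominate
      intro y hy j hj
      show xf j < y
      rcases Nat.lt_or_ge j i with hji | hji
      · rw [hxfd, Function.update_of_ne (by omega : j ≠ i)]
        exact hW4 y (f1 (cutAbove_subset f3 hy)) j hji
      · have hji' : j = i := by omega
        subst hji'
        rw [hxfd, Function.update_self]
        exact cutAbove_gt C.hn f3 y hy
    · -- properties of chosen elements
      intro j hj
      show xf j ∈ Y ∧ setIdx C.p.A (xf j) % n = j % n
      rcases Nat.lt_or_ge j i with hji | hji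
      · rw [hxfd, Function.update_of_ne (by omega : j ≠ i)]
        exact hW5 j hji
      · have hji' : j = i := by omega
        subst hji'
        rw [hxfd, Function.update_self]
        exact ⟨hxiY, hxiph⟩
    · -- all new stems reject
      intro u hvu husub hleg
      replace husub : u ⊆ v ∪ (Finset.range (i + 1)).image xf := husub
      have hvlt : ∀ z ∈ v, z < xi := fun z hz => hbd xi hxiY z hz
      have hcov : ∀ y ∈ u, y = xi ∨ y ∈ v ∪ (Finset.range i).image st.1 := by
        intro y hy
        rcases Finset.mem_union.1 (husub hy) with hyv | hyim
        · exact Or.inr (Finset.mem_union_left _ hyv)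
        · obtain ⟨j, hjr, hje⟩ := Finset.mem_image.1 hyim
          rcases Nat.lt_or_ge j i with hji | hji
          · rw [hxfd, Function.update_of_ne (by omega : j ≠ i)] at hje
            exact Or.inr (Finset.mem_union_right _
              (Finset.mem_image.2 ⟨j, Finset.mem_range.2 hji, hje⟩))
          · have hji' : j = i := by
              have := Finset.mem_range.1 hjr
              omega
            subst hji'
            rw [hxfd, Function.update_self] at hje
            exact Or.inl hje.symm
      have hsubW' : cutAbove n Y1 xi ⊆ {y | y ∈ Y1 ∧ xi < y} :=
        fun y hy => ⟨cutAbove_subset f3 hy, cutAbove_gt C.hn f3 y hy⟩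
      by_cases hxiu : xi ∈ u
      · have hxiNv : xi ∉ v := fun hc => absurd (hvlt xi hc) (lt_irrefl _)
        have htop : ∀ y ∈ u, y ≠ xi → y < xi := by
          intro y hy hne
          rcases hcov y hy with h | h
          · exact absurd h hne
          · rcases Finset.mem_union.1 h with hyv | hyim
            · exact hvlt y hyv
            · obtain ⟨j, hjr, hje⟩ := Finset.mem_image.1 hyim
              exact hje ▸ hW4 xi hxiW j (Finset.mem_range.1 hjr)
        have hxiNpw : xi ∉ C.p.w := fun hc => hxiNv (hlegv.1 hc)
        obtain ⟨hlegu', hphu'⟩ := C.leg_erase_top hleg hxiu htop hxiNpw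
        have hvu' : v ⊆ u.erase xi := fun y hy =>
          Finset.mem_erase.2 ⟨fun hc => hxiNv (hc ▸ hy), hvu hy⟩
        have husub' : u.erase xi ⊆ v ∪ (Finset.range i).image st.1 := by
          intro y hy
          obtain ⟨hyne, hyu⟩ := Finset.mem_erase.1 hy
          rcases hcov y hyu with h | h
          · exact absurd h hyne
          · exact h
        have hbd' : ∀ y ∈ st.2, ∀ z ∈ u.erase xi, z < y := by
          intro y hy z hz
          rcases Finset.mem_union.1 (husub' hz) with hzv | hzim
          · exact hbd y (hW3 hy) z hzv
          · obtain ⟨j, hjr, hje⟩ := Finset.mem_image.1 hzim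
            exact hje ▸ hW4 y hy j (Finset.mem_range.1 hjr)
        have hrej' : ¬ C.Acc m (u.erase xi) st.2 := hW6 _ hvu' husub' hlegu'
        have hkey := f4 _ (Finset.mem_toList.2 (Finset.mem_powerset.2 husub'))
          hlegu' hbd' hrej' xi hxiY1 hphu'
        rw [Finset.insert_erase hxiu] at hkey
        exact fun hacc' => hkey (C.acc_mono hsubW' hacc')
      · have husub'' : u ⊆ v ∪ (Finset.range i).image st.1 := by
          intro y hy
          rcases hcov y hy with h | h
          · exact absurd (h ▸ hy) hxiu
          · exact h
        exact fun hacc' => hW6 u hvu husub'' hleg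
          (C.acc_mono ((cutAbove_subset f3).trans f1) hacc')
  obtain ⟨f, hfI, hfR⟩ := seqBuilder Inv Rel init step
  set xx : ℕ → ℕ := fun j => (f (j + 1)).1 j with hxxd
  have hstab : ∀ M j, j < M → (f M).1 j = xx j := by
    intro M
    induction M with
    | zero => omega
    | succ M ih =>
      intro j hj
      rcases Nat.lt_or_ge j M with hjM | hjM
      · rw [(hfR M).1 j hjM, ih j hjM]
      · have : j = M := by omega
        subst this
        rfl
  have hxxW : ∀ j, xx j ∈ (f j).2 := fun j => (hfR j).2.1
  have hWchain : ∀ i j, i ≤ j → (f j).2 ⊆ (f i).2 :=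
    chain_subset (fun i => (hfR i).2.2)
  have hxxY : ∀ j, xx j ∈ Y ∧ setIdx C.p.A (xx j) % n = j % n := by
    intro j
    have := (hfI (j + 1)).2.2.2.2.1 j (by omega)
    exact this
  have hxxmono : StrictMono xx := by
    apply strictMono_nat_of_lt_succ
    intro j
    have h4 := (hfI (j + 1)).2.2.2.1
    have := h4 (xx (j + 1)) (hxxW (j + 1)) j (by omega)
    rwa [hstab (j + 1) j (by omega)] at this
  have halR : aligned C.p (Set.range xx) :=
    aligned_range hxxmono (fun j => hal.1 (hxxY j).1) (fun j => (hxxY j).2)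
  have hRinf : (Set.range xx).Infinite := Set.infinite_range_of_injective hxxmono.injective
  have hRY : Set.range xx ⊆ Y := by rintro y ⟨j, rfl⟩; exact (hxxY j).1
  obtain ⟨rr, hrr, tt, httv, httr⟩ :=
    C.hmax m ⟨v, Set.range xx, hRinf⟩ (C.leg_le hlegv halR hRinf)
  obtain ⟨tw, tA, tAinf⟩ := tt
  obtain ⟨h1, h2, h3, h4⟩ := QLE_dest C.hn httv
  simp only at h1 h2 h3 h4 httr
  obtain ⟨htAsub, htAal⟩ := sub4_aligned C.hn halR h4
  have hlegtw : C.Leg tw := by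
    refine ⟨hlegv.1.trans h1, ?_⟩
    intro x hx hxp
    by_cases hxv : x ∈ v
    · obtain ⟨e1, e2, e3⟩ := hlegv.2 x hxv hxp
      exact ⟨e1, e2, by rw [initSeg_setIdx h1 h2 hxv]; exact e3⟩
    · obtain ⟨hxR, hxidx⟩ := h3 x hx hxv
      refine ⟨halR.1 hxR, fun y hy => h2 x hx hxv y (hlegv.1 hy), ?_⟩
      rw [← hxidx, ← halR.2 x hxR]
  set i₀ := (tw.sup fun x => setIdx (Set.range xx) x) + 1 with hi₀
  have hcover : tw ⊆ v ∪ (Finset.range i₀).image xx := by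
    intro x hx
    by_cases hxv : x ∈ v
    · exact Finset.mem_union_left _ hxv
    · obtain ⟨hxR, _⟩ := h3 x hx hxv
      obtain ⟨j, hj⟩ := hxR
      have hjidx : setIdx (Set.range xx) x = j := hj ▸ setIdx_range hxxmono j
      have hjlt : j < i₀ := by
        have h5 : setIdx (Set.range xx) x ≤ tw.sup fun x => setIdx (Set.range xx) x :=
          Finset.le_sup (f := fun x => setIdx (Set.range xx) x) hx
        rw [hjidx] at h5
        omega
      exact Finset.mem_union_right _ (Finset.mem_image.2 ⟨j, Finset.mem_range.2 hjlt, hj⟩)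
  have himg : (Finset.range i₀).image (f i₀).1 = (Finset.range i₀).image xx :=
    Finset.image_congr (fun j hj => hstab i₀ j (Finset.mem_range.1 hj))
  have hrej₀ : ¬ C.Acc m tw (f i₀).2 := by
    refine (hfI i₀).2.2.2.2.2 tw h1 ?_ hlegtw
    rw [himg]
    exact hcover
  have hZsub : cutAbove n tA (xx i₀ - 1) ⊆ (f i₀).2 := by
    intro y hy
    have hyA : y ∈ tA := cutAbove_subset tAinf hy
    have hygt : xx i₀ - 1 < y := cutAbove_gt C.hn tAinf y hy
    obtain ⟨j, hj⟩ := htAsub hyA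
    have hji : i₀ ≤ j := by
      by_contra hc
      have : xx j < xx i₀ := hxxmono (by omega)
      omega
    exact hWchain i₀ j hji (hj ▸ hxxW j)
  exact hrej₀ (C.acc_of_le hZsub (cutAbove_aligned C.hn htAal tAinf)
    (cutAbove_infinite tAinf) hrr
    (QLE_trans C.hn (QLE_pure (aligned_sub4 htAal
      (cutAbove_aligned C.hn htAal tAinf) (cutAbove_subset tAinf))) httr))

end PartF

section PartG
open L17
attribute [local instance] Classical.propDecidable

variable {n : ℕ} (C : Ctx n)

lemma Ctx.foldPD {m : ℕ} (L : List (Finset ℕ)) {Y : Set ℕ}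
    (hal : aligned C.p Y) (hYi : Y.Infinite)
    (hbd : ∀ y ∈ Y, ∀ u ∈ L, ∀ z ∈ u, z < y) :
    ∃ (B : Finset ℕ → Set ℕ) (k : Finset ℕ → ℕ) (Y' : Set ℕ),
      Y' ⊆ Y ∧ aligned C.p Y' ∧ Y'.Infinite ∧
      ∀ u ∈ L, C.Leg u →
        B u ⊆ Y ∧ aligned C.p (B u) ∧ Y' ⊆ B u ∧
        ∃ hB : (B u).Infinite, ∀ r ∈ C.A m, QCompat n r ⟨u, B u, hB⟩ → C.h m r = k u := by
  induction L generalizing Y with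
  | nil => exact ⟨fun _ => Y, fun _ => 0, Y, subset_rfl, hal, hYi, by simp⟩
  | cons u L ih =>
    by_cases hleg : C.Leg u
    · have hbdu : ∀ y ∈ Y, ∀ z ∈ u, z < y :=
        fun y hy z hz => hbd y hy u List.mem_cons_self z hz
      obtain ⟨Z, hZY, hZal, hZi, k0, _, hdec⟩ := C.pureDecision hleg hal hYi hbdu
      obtain ⟨B, kf, Y', g1, g2, g3, g4⟩ := ih hZal hZi
        (fun y hy u2 hu2 z hz => hbd y (hZY hy) u2 (List.mem_cons_of_mem u hu2) z hz)
      refine ⟨Function.update B u Z, Function.update kf u k0, Y', g1.trans hZY, g2, g3, ?_⟩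
      intro u' hu' hleg'
      by_cases he : u' = u
      · subst he
        rw [Function.update_self, Function.update_self]
        exact ⟨hZY, hZal, g1, hZi, hdec⟩
      · rw [Function.update_of_ne he, Function.update_of_ne he]
        rcases List.mem_cons.1 hu' with hc | hmem
        · exact absurd hc he
        · obtain ⟨e1, e2, e3, e4⟩ := g4 u' hmem hleg'
          exact ⟨e1.trans hZY, e2, e3, e4⟩
    · obtain ⟨B, kf, Y', g1, g2, g3, g4⟩ := ih hal hYi
        (fun y hy u2 hu2 z hz => hbd y hy u2 (List.mem_cons_of_mem u hu2) z hz)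
      refine ⟨B, kf, Y', g1, g2, g3, ?_⟩
      intro u' hu' hleg'
      rcases List.mem_cons.1 hu' with hc | hmem
      · exact absurd (hc ▸ hleg') hleg
      · exact g4 u' hmem hleg'

/-- the outer fusion: a pure sequence `c` with, for every stage `m` and sub-stem `u`,
a deciding reservoir `B m u` absorbing the tail of `c`. -/
lemma Ctx.outer : ∃ (c : ℕ → ℕ) (B : ℕ → Finset ℕ → Set ℕ) (k : ℕ → Finset ℕ → ℕ),
    StrictMono c ∧
    (∀ j, c j ∈ C.p.A ∧ setIdx C.p.A (c j) % n = j % n ∧ ∀ z ∈ C.p.w, z < c j) ∧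
    ∀ m u, u ⊆ Finset.range m → C.Leg (C.p.w ∪ u.image c) →
      aligned C.p (B m u) ∧ (∀ j, m ≤ j → c j ∈ B m u) ∧
      ∃ hB : (B m u).Infinite,
        ∀ r ∈ C.A m, QCompat n r ⟨C.p.w ∪ u.image c, B m u, hB⟩ → C.h m r = k m u := by
  set Inv : ℕ → (ℕ → ℕ) × Set ℕ × (ℕ → Finset ℕ → Set ℕ) × (ℕ → Finset ℕ → ℕ) → Prop :=
    fun m st =>
      aligned C.p st.2.1 ∧ st.2.1.Infinite ∧
      (∀ y ∈ st.2.1, ∀ z ∈ C.p.w, z < y) ∧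
      (∀ y ∈ st.2.1, ∀ j < m, st.1 j < y) ∧
      (∀ j < m, st.1 j ∈ C.p.A ∧ setIdx C.p.A (st.1 j) % n = j % n ∧
        (∀ z ∈ C.p.w, z < st.1 j) ∧ ∀ j' < j, st.1 j' < st.1 j) ∧
      (∀ m' < m, ∀ u : Finset ℕ, u ⊆ Finset.range m' →
        C.Leg (C.p.w ∪ u.image st.1) →
        aligned C.p (st.2.2.1 m' u) ∧
        (∀ j, m' ≤ j → j < m → st.1 j ∈ st.2.2.1 m' u) ∧ st.2.1 ⊆ st.2.2.1 m' u ∧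
        ∃ hB : (st.2.2.1 m' u).Infinite,
          ∀ r ∈ C.A m', QCompat n r ⟨C.p.w ∪ u.image st.1, st.2.2.1 m' u, hB⟩ →
            C.h m' r = st.2.2.2 m' u) with hInvd
  set Rel : ℕ → (ℕ → ℕ) × Set ℕ × (ℕ → Finset ℕ → Set ℕ) × (ℕ → Finset ℕ → ℕ) →
      (ℕ → ℕ) × Set ℕ × (ℕ → Finset ℕ → Set ℕ) × (ℕ → Finset ℕ → ℕ) → Prop :=
    fun m st st' =>
      (∀ j < m, st'.1 j = st.1 j) ∧
      (∀ m' < m, st'.2.2.1 m' = st.2.2.1 m' ∧ st'.2.2.2 m' = st.2.2.2 m') with hReld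
  have init : ∃ st, Inv 0 st := by
    refine ⟨(id, cutAbove n C.p.A (C.p.w.sup id), fun _ _ => Set.univ, fun _ _ => 0),
      cutAbove_aligned C.hn (aligned_base C.p) C.p.infinite,
      cutAbove_infinite C.p.infinite, ?_,
      fun y _ j hj => absurd hj (Nat.not_lt_zero j),
      fun j hj => absurd hj (Nat.not_lt_zero j),
      fun m' hm' => absurd hm' (Nat.not_lt_zero m')⟩
    intro y hy z hz
    have h1 : C.p.w.sup id < y := cutAbove_gt C.hn C.p.infinite y hy
    have h2 : z ≤ C.p.w.sup id := Finset.le_sup (f := id) hz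
    omega
  have step : ∀ m st, Inv m st → ∃ st', Inv (m + 1) st' ∧ Rel m st st' := by
    intro m st hst
    obtain ⟨hW1, hW2, hW3, hW4, hW5, hW6⟩ := hst
    have hbdL : ∀ y ∈ st.2.1, ∀ u' ∈ ((Finset.range m).powerset.toList).map
        (fun u => C.p.w ∪ u.image st.1), ∀ z ∈ u', z < y := by
      intro y hy u' hu' z hz
      obtain ⟨u, hu, rfl⟩ := List.mem_map.1 hu'
      rcases Finset.mem_union.1 hz with hzw | hzi
      · exact hW3 y hy z hzw
      · obtain ⟨j, hj, rfl⟩ := Finset.mem_image.1 hzi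
        have hjm : j < m := Finset.mem_range.1
          ((Finset.mem_powerset.1 (Finset.mem_toList.1 hu)) hj)
        exact hW4 y hy j hjm
    obtain ⟨Bf, kf, Y', g1, g2, g3, g4⟩ := C.foldPD
      (((Finset.range m).powerset.toList).map (fun u => C.p.w ∪ u.image st.1)) hW1 hW2 hbdL
    obtain ⟨cm, hcmY', _, hcmph⟩ := exists_phase C.hn g2 g3 0 m
    have hcmY : cm ∈ st.2.1 := g1 hcmY'
    set cp' : ℕ → ℕ := Function.update st.1 m cm with hcp'd
    have hcpold : ∀ j, j < m → cp' j = st.1 j := fun j hj => by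
      rw [hcp'd, Function.update_of_ne (by omega : j ≠ m)]
    have hcpm : cp' m = cm := by rw [hcp'd, Function.update_self]
    have himgu : ∀ u : Finset ℕ, u ⊆ Finset.range m → u.image cp' = u.image st.1 := by
      intro u hu
      apply Finset.image_congr
      intro j hj
      exact hcpold j (Finset.mem_range.1 (hu hj))
    have hstem : ∀ u : Finset ℕ, u ⊆ Finset.range m →
        C.p.w ∪ u.image cp' = C.p.w ∪ u.image st.1 := by
      intro u hu
      rw [himgu u hu]
    set BH' : ℕ → Finset ℕ → Set ℕ :=
      Function.update st.2.2.1 m (fun u => Bf (C.p.w ∪ u.image st.1)) with hBH'd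
    set kH' : ℕ → Finset ℕ → ℕ :=
      Function.update st.2.2.2 m (fun u => kf (C.p.w ∪ u.image st.1)) with hkH'd
    have hBHold : ∀ m', m' ≠ m → BH' m' = st.2.2.1 m' := fun m' hm' => by
      rw [hBH'd]; exact Function.update_of_ne hm' _ _
    have hkHold : ∀ m', m' ≠ m → kH' m' = st.2.2.2 m' := fun m' hm' => by
      rw [hkH'd]; exact Function.update_of_ne hm' _ _
    have hBHm : BH' m = fun u => Bf (C.p.w ∪ u.image st.1) := by
      rw [hBH'd]; exact Function.update_self _ _ _
    have hkHm : kH' m = fun u => kf (C.p.w ∪ u.image st.1) := by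
      rw [hkH'd]; exact Function.update_self _ _ _
    refine ⟨(cp', cutAbove n Y' cm, BH', kH'),
      ⟨cutAbove_aligned C.hn g2 g3, cutAbove_infinite g3, ?_, ?_, ?_, ?_⟩, ?_, ?_⟩
    · -- above p.w
      intro y hy z hz
      exact hW3 y (g1 (cutAbove_subset g3 hy)) z hz
    · -- above previous c's
      intro y hy j hj
      show cp' j < y
      rcases Nat.lt_or_ge j m with hjm | hjm
      · rw [hcpold j hjm]
        exact hW4 y (g1 (cutAbove_subset g3 hy)) j hjm
      · have : j = m := by omega
        subst this
        rw [hcpm]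
        exact cutAbove_gt C.hn g3 y hy
    · -- properties of the c's
      intro j hj
      show cp' j ∈ C.p.A ∧ setIdx C.p.A (cp' j) % n = j % n ∧
        (∀ z ∈ C.p.w, z < cp' j) ∧ ∀ j' < j, cp' j' < cp' j
      rcases Nat.lt_or_ge j m with hjm | hjm
      · obtain ⟨e1, e2, e3, e4⟩ := hW5 j hjm
        rw [hcpold j hjm]
        exact ⟨e1, e2, e3, fun j' hj' => by rw [hcpold j' (by omega)]; exact e4 j' hj'⟩
      · have : j = m := by omega
        subst this
        rw [hcpm]
        refine ⟨g2.1 hcmY', hcmph, hW3 cm hcmY, ?_⟩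
        intro j' hj'
        rw [hcpold j' hj']
        exact hW4 cm hcmY j' hj'
    · -- history of decided reservoirs
      intro m' hm' u hu hleg
      show aligned C.p (BH' m' u) ∧
        (∀ j, m' ≤ j → j < m + 1 → cp' j ∈ BH' m' u) ∧
        cutAbove n Y' cm ⊆ BH' m' u ∧
        ∃ hB : (BH' m' u).Infinite, ∀ r ∈ C.A m',
          QCompat n r ⟨C.p.w ∪ u.image cp', BH' m' u, hB⟩ → C.h m' r = kH' m' u
      rcases Nat.lt_or_ge m' m with hmm | hmm
      · have hune : m' ≠ m := by omega
        have husub : u ⊆ Finset.range m := hu.trans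
          (Finset.range_subset_range.2 (by omega))
        rw [hBHold m' hune, hkHold m' hune]
        have hlegold : C.Leg (C.p.w ∪ u.image st.1) := by
          rw [← hstem u husub]
          exact hleg
        obtain ⟨e1, e2, e3, e4⟩ := hW6 m' hmm u hu hlegold
        refine ⟨e1, ?_, (cutAbove_subset g3).trans (g1.trans e3), ?_⟩
        · intro j hj1 hj2
          rcases Nat.lt_or_ge j m with hjm | hjm
          · rw [hcpold j hjm]
            exact e2 j hj1 hjm
          · have : j = m := by omega
            subst this
            rw [hcpm]
            exact e3 hcmY
        · rw [hstem u husub]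
          exact e4
      · have : m' = m := by omega
        subst this
        have husub : u ⊆ Finset.range m' := hu
        rw [hBHm, hkHm]
        have hlegold : C.Leg (C.p.w ∪ u.image st.1) := by
          rw [← hstem u husub]
          exact hleg
        have hmem : (C.p.w ∪ u.image st.1) ∈ ((Finset.range m').powerset.toList).map
            (fun u => C.p.w ∪ u.image st.1) :=
          List.mem_map.2 ⟨u, Finset.mem_toList.2 (Finset.mem_powerset.2 husub), rfl⟩
        obtain ⟨e1, e2, e3, e4⟩ := g4 _ hmem hlegold
        refine ⟨e2, ?_, (cutAbove_subset g3).trans e3, ?_⟩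
        · intro j hj1 hj2
          have : j = m' := by omega
          subst this
          rw [hcpm]
          exact e3 hcmY'
        · rw [hstem u husub]
          exact e4
    · -- Rel 1
      exact fun j hj => hcpold j hj
    · -- Rel 2
      intro m' hm'
      exact ⟨hBHold m' (by omega), hkHold m' (by omega)⟩
  obtain ⟨f, hfI, hfR⟩ := seqBuilder Inv Rel init step
  set c : ℕ → ℕ := fun j => (f (j + 1)).1 j with hcd
  have hstab : ∀ M j, j < M → (f M).1 j = c j := by
    intro M
    induction M with
    | zero => omega
    | succ M ih =>
      intro j hj
      rcases Nat.lt_or_ge j M with hjM | hjM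
      · rw [(hfR M).1 j hjM, ih j hjM]
      · have : j = M := by omega
        subst this
        rfl
  have hBstab : ∀ M m', m' < M →
      (f M).2.2.1 m' = (f (m' + 1)).2.2.1 m' ∧
      (f M).2.2.2 m' = (f (m' + 1)).2.2.2 m' := by
    intro M
    induction M with
    | zero => omega
    | succ M ih =>
      intro m' hm'
      rcases Nat.lt_or_ge m' M with hmM | hmM
      · obtain ⟨e1, e2⟩ := (hfR M).2 m' hmM
        obtain ⟨d1, d2⟩ := ih m' hmM
        exact ⟨e1.trans d1, e2.trans d2⟩
      · have : m' = M := by omega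
        subst this
        exact ⟨rfl, rfl⟩
  have hcprop : ∀ j, c j ∈ C.p.A ∧ setIdx C.p.A (c j) % n = j % n ∧
      ∀ z ∈ C.p.w, z < c j := by
    intro j
    obtain ⟨e1, e2, e3, _⟩ := (hfI (j + 1)).2.2.2.2.1 j (by omega)
    exact ⟨e1, e2, e3⟩
  have hcmono : StrictMono c := by
    apply strictMono_nat_of_lt_succ
    intro j
    obtain ⟨_, _, _, e4⟩ := (hfI (j + 2)).2.2.2.2.1 (j + 1) (by omega)
    have := e4 j (by omega)
    rwa [hstab (j + 2) j (by omega), hstab (j + 2) (j + 1) (by omega)] at this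
  refine ⟨c, fun m u => (f (m + 1)).2.2.1 m u, fun m u => (f (m + 1)).2.2.2 m u,
    hcmono, hcprop, ?_⟩
  intro m u hsub hleg
  have himgM : ∀ M, m < M → u.image (f M).1 = u.image c := by
    intro M hM
    apply Finset.image_congr
    intro j hj
    exact hstab M j (by
      have := Finset.mem_range.1 (hsub hj)
      omega)
  have hlegM : ∀ M, m < M → C.Leg (C.p.w ∪ u.image (f M).1) := by
    intro M hM
    rw [himgM M hM]
    exact hleg
  have hO5 := (hfI (m + 1)).2.2.2.2.2 m (by omega) u hsub (hlegM (m + 1) (by omega))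
  obtain ⟨e1, e2, e3, e4⟩ := hO5
  refine ⟨e1, ?_, ?_⟩
  · intro j hj
    have hO5' := (hfI (j + 1)).2.2.2.2.2 m (by omega) u hsub (hlegM (j + 1) (by omega))
    have := hO5'.2.1 j hj (by omega)
    rw [hstab (j + 1) j (by omega)] at this
    rwa [(hBstab (j + 1) m (by omega)).1] at this
  · rw [himgM (m + 1) (by omega)] at e4
    exact e4

end PartG

section PartH
open L17
attribute [local instance] Classical.propDecidable

variable {n : ℕ} (C : Ctx n)

lemma Ctx.final : ∃ q : QCond n, q.w = C.p.w ∧ QLE n q C.p ∧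
    ∃ H : ℕ → Finset ℕ, ∀ m : ℕ, (H m).card ≤ 2 ^ m ∧
      ∀ r ∈ C.A m, QCompat n r q → C.h m r ∈ H m := by
  obtain ⟨c, B, k, hcmono, hcprop, hmain⟩ := C.outer
  have halC : aligned C.p (Set.range c) :=
    aligned_range hcmono (fun j => (hcprop j).1) (fun j => (hcprop j).2.1)
  have hCinf : (Set.range c).Infinite := Set.infinite_range_of_injective hcmono.injective
  set q : QCond n := ⟨C.p.w, Set.range c, hCinf⟩ with hqd
  have hqp : QLE n q C.p := by
    refine QLE_mk subset_rfl (fun x hx hxp _ _ => absurd hx hxp)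
      (fun x hx hxp => absurd hx hxp)
      (aligned_sub4 (aligned_base C.p) halC halC.1)
  refine ⟨q, rfl, hqp, fun m => (Finset.range m).powerset.image (k m), fun m => ⟨?_, ?_⟩⟩
  · calc ((Finset.range m).powerset.image (k m)).card
        ≤ (Finset.range m).powerset.card := Finset.card_image_le
      _ = 2 ^ m := by rw [Finset.card_powerset, Finset.card_range]
  intro r hr hcompat
  obtain ⟨s, hsr, hsq⟩ := hcompat
  obtain ⟨sw, sA, sAinf⟩ := s
  obtain ⟨d1, d2, d3, d4⟩ := QLE_dest C.hn hsq
  simp only at d1 d2 d3 d4 hsr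
  obtain ⟨hsAsub, hsAal⟩ := sub4_aligned C.hn halC d4
  set u : Finset ℕ := (Finset.range m).filter (fun j => c j ∈ sw) with hud
  have husub : u ⊆ Finset.range m := Finset.filter_subset _ _
  set v : Finset ℕ := C.p.w ∪ u.image c with hvd
  have hcnp : ∀ j, c j ∉ C.p.w := fun j hc => absurd ((hcprop j).2.2 (c j) hc) (lt_irrefl _)
  have hvsub : v ⊆ sw := by
    intro x hx
    rcases Finset.mem_union.1 hx with hxw | hxi
    · exact d1 hxw
    · obtain ⟨j, hj, rfl⟩ := Finset.mem_image.1 hxi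
      exact (Finset.mem_filter.1 hj).2
  -- each element of sw \ v is some c j with j ≥ m
  have hswv : ∀ x ∈ sw, x ∉ v → ∃ j, m ≤ j ∧ c j = x ∧
      setIdx (↑sw : Set ℕ) x % n = j % n := by
    intro x hx hxv
    have hxp : x ∉ C.p.w := fun hc => hxv (Finset.mem_union_left _ hc)
    obtain ⟨hxC, hxIdx⟩ := d3 x hx hxp
    obtain ⟨j, hj⟩ := hxC
    have hidx : setIdx (Set.range c) x = j := hj ▸ setIdx_range hcmono j
    refine ⟨j, ?_, hj, by rw [← hxIdx, hidx]⟩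
    by_contra hc
    have hju : j ∈ u := Finset.mem_filter.2 ⟨Finset.mem_range.2 (by omega), hj ▸ hx⟩
    exact hxv (Finset.mem_union_right _ (Finset.mem_image.2 ⟨j, hju, hj⟩))
  have habove : ∀ x ∈ sw, x ∉ v → ∀ y ∈ v, y < x := by
    intro x hx hxv y hy
    obtain ⟨j, hjm, hje, _⟩ := hswv x hx hxv
    rcases Finset.mem_union.1 hy with hyw | hyi
    · exact hje ▸ (hcprop j).2.2 y hyw
    · obtain ⟨j', hj', rfl⟩ := Finset.mem_image.1 hyi
      have : j' < m := Finset.mem_range.1 (husub hj')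
      exact hje ▸ hcmono (by omega)
  have hlegv : C.Leg v := by
    constructor
    · exact Finset.subset_union_left
    · intro x hx hxp
      have hxi : x ∈ u.image c := by
        rcases Finset.mem_union.1 hx with hxw | hxi
        · exact absurd hxw hxp
        · exact hxi
      obtain ⟨j, hj, rfl⟩ := Finset.mem_image.1 hxi
      refine ⟨(hcprop j).1, (hcprop j).2.2, ?_⟩
      have h1 : setIdx (↑v : Set ℕ) (c j) = setIdx (↑sw : Set ℕ) (c j) :=
        (initSeg_setIdx hvsub habove hx).symm
      have h2 : c j ∈ sw := (Finset.mem_filter.1 hj).2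
      have hxp' : c j ∉ C.p.w := hcnp j
      obtain ⟨hxC, hxIdx⟩ := d3 (c j) h2 hxp'
      have hidx : setIdx (Set.range c) (c j) = j := setIdx_range hcmono j
      rw [h1, ← hxIdx, hidx, (hcprop j).2.1]
  obtain ⟨e1, e2, hB, hdec⟩ := hmain m u husub hlegv
  -- shrink sA into the tail above all c j , j < m
  set b := ((Finset.range m).image c).sup id with hbd
  have hcut_tail : ∀ y ∈ cutAbove n sA b, ∃ j, m ≤ j ∧ c j = y := by
    intro y hy
    have hyA : y ∈ sA := cutAbove_subset sAinf hy
    have hyb : b < y := cutAbove_gt C.hn sAinf y hy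
    obtain ⟨j, hj⟩ := hsAsub hyA
    refine ⟨j, ?_, hj⟩
    by_contra hc
    have : c j ≤ b := Finset.le_sup (f := id)
      (Finset.mem_image.2 ⟨j, Finset.mem_range.2 (by omega), rfl⟩)
    omega
  have hcutB : cutAbove n sA b ⊆ B m u := by
    intro y hy
    obtain ⟨j, hjm, hje⟩ := hcut_tail y hy
    exact hje ▸ e2 j hjm
  have hs'le : QLE n ⟨sw, cutAbove n sA b, cutAbove_infinite sAinf⟩ ⟨v, B m u, hB⟩ := by
    refine QLE_mk hvsub habove ?_ (aligned_sub4 e1 (cutAbove_aligned C.hn hsAal sAinf) hcutB)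
    intro x hx hxv
    obtain ⟨j, hjm, hje, hidx⟩ := hswv x hx hxv
    refine ⟨hje ▸ e2 j hjm, ?_⟩
    rw [e1.2 x (hje ▸ e2 j hjm), ← hje, (hcprop j).2.1, hje, hidx]
  have hs's : QLE n ⟨sw, cutAbove n sA b, cutAbove_infinite sAinf⟩ ⟨sw, sA, sAinf⟩ :=
    QLE_pure (aligned_sub4 hsAal (cutAbove_aligned C.hn hsAal sAinf) (cutAbove_subset sAinf))
  have := hdec r hr ⟨⟨sw, cutAbove n sA b, cutAbove_infinite sAinf⟩,
    QLE_trans C.hn hs's hsr, hs'le⟩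
  rw [this]
  exact Finset.mem_image.2 ⟨u, Finset.mem_powerset.2 husub, rfl⟩

end PartH


end L17Proof

/-- Lemma 1.17 (the Laver property of `Q = Qⁿ`, combinatorial form): given `p ∈ Q`,
`g : ω → ω`, and for each `m` a maximal antichain `A m` below `p` with values
`h m r < g m` for `r ∈ A m`, there are a pure extension `q ≤⁰ p` and `H : ω → [ω]^{<ω}`
with `|H m| ≤ 2^m` such that `h m r ∈ H m` for every `r ∈ A m` compatible with `q`. -/
theorem stmt7 (n : ℕ) (hn : 0 < n) (p : QCond n) (g : ℕ → ℕ)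
    (A : ℕ → Set (QCond n)) (h : ℕ → QCond n → ℕ)
    (hbelow : ∀ m : ℕ, ∀ r ∈ A m, QLE n r p)
    (hanti : ∀ m : ℕ, ∀ r ∈ A m, ∀ s ∈ A m, r ≠ s → ¬ QCompat n r s)
    (hmax : ∀ m : ℕ, ∀ r : QCond n, QLE n r p → ∃ s ∈ A m, QCompat n r s)
    (hval : ∀ m : ℕ, ∀ r ∈ A m, h m r < g m) :
    ∃ q : QCond n, q.w = p.w ∧ QLE n q p ∧
      ∃ H : ℕ → Finset ℕ, ∀ m : ℕ, (H m).card ≤ 2 ^ m ∧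
        ∀ r ∈ A m, QCompat n r q → h m r ∈ H m :=
  L17Proof.Ctx.final ⟨hn, p, g, A, h, hanti, hmax, hval⟩
end

section
/- Let 0 < n < ω and let T ⊆ P_n with levels ⟨T_α : α < 𝔥(n)⟩ be a base tree for P_n. Then: (i) for every limit ordinal λ of countable cofinality and every ≤-decreasing sequence ⟨x_ξ : ξ < λ⟩ of elements of T there exists y ∈ T with y ≤ x_ξ for every ξ < λ; and (ii) for every x ∈ T and every α < 𝔥(n) there exist β with α ≤ β < 𝔥(n) and y ∈ T_β with y ≤ x. -/
/-- `Pn n` is the poset of `n`-tuples of infinite subsets of ℕ, representing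
`(P(ω)/fin)ⁿ`. -/
def Pn (n : ℕ) := {x : Fin n → Set ℕ // ∀ i : Fin n, (x i).Infinite}

/-- The order of `Pn n`: `x ≤ y` iff `x i ⊆* y i` (almost inclusion) for all `i`. -/
def PnLE {n : ℕ} (x y : Pn n) : Prop := ∀ i : Fin n, (x.1 i \ y.1 i).Finite

/-- Compatibility in `Pn n`: `x i ∩ y i` is infinite for every `i`. -/
def PnCompat {n : ℕ} (x y : Pn n) : Prop := ∀ i : Fin n, (x.1 i ∩ y.1 i).Infinite

/-- `D ⊆ Pn n` is open: downward closed under `≤`. -/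
def PnOpen {n : ℕ} (D : Set (Pn n)) : Prop :=
  ∀ x y : Pn n, PnLE x y → y ∈ D → x ∈ D

/-- `D ⊆ Pn n` is dense: every element has a `≤`-extension in `D`. -/
def PnDense {n : ℕ} (D : Set (Pn n)) : Prop := ∀ x : Pn n, ∃ y ∈ D, PnLE y x

/-- The distributivity number `𝔥(n)`: the least cardinality of a family of open dense
subsets of `Pn n` whose intersection is not dense. -/
noncomputable def hdist (n : ℕ) : Cardinal :=
  sInf {κ : Cardinal | ∃ F : Set (Set (Pn n)),
    Cardinal.mk F = κ ∧ (∀ D ∈ F, PnOpen D ∧ PnDense D) ∧ ¬ PnDense (⋂₀ F)}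

/-- The set of strict predecessors of `x` in `T`. -/
def predT {n : ℕ} (T : Set (Pn n)) (x : Pn n) : Set (Pn n) :=
  {y ∈ T | PnLE x y ∧ ¬ PnLE y x}

/-- The reverse of `≤` (as a strict relation) on the predecessors of `x` in `T`. -/
def predRel {n : ℕ} (T : Set (Pn n)) (x : Pn n) :
    predT T x → predT T x → Prop :=
  fun a b => PnLE b.1 a.1 ∧ ¬ PnLE a.1 b.1

/-- `T` with levels `L` is a base tree for `Pn n` of height `𝔥(n)`:
`T` is dense; the predecessors of each node are well-ordered by the reverse of `≤`;
`L α` (for `α < 𝔥(n)`) is the set of nodes whose predecessors have order type `α`;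
each level is nonempty, the levels cover `T`, each level is a maximal antichain in
`Pn n`, and every node has `2^ℵ₀`-many immediate successors in `T`. -/
structure IsBaseTree (n : ℕ) (T : Set (Pn n)) (L : Ordinal → Set (Pn n)) : Prop where
  dense : PnDense T
  wellOrdered : ∀ x (hx : x ∈ T), IsWellOrder (predT T x) (predRel T x)
  level_eq : ∀ α < (hdist n).ord, ∀ x : Pn n,
    x ∈ L α ↔ ∃ hx : x ∈ T, @Ordinal.type _ (predRel T x) (wellOrdered x hx) = α
  level_nonempty : ∀ α < (hdist n).ord, (L α).Nonempty
  level_covers : ∀ x ∈ T, ∃ α < (hdist n).ord, x ∈ L α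
  level_antichain : ∀ α < (hdist n).ord, ∀ x ∈ L α, ∀ y ∈ L α, x ≠ y → ¬ PnCompat x y
  level_maximal : ∀ α < (hdist n).ord, ∀ z : Pn n, ∃ x ∈ L α, PnCompat z x
  succ_card : ∀ y ∈ T,
    Cardinal.mk {x : Pn n // x ∈ T ∧ predT T x = predT T y ∪ {y}} = Cardinal.continuum

lemma pnle_refl {n : ℕ} (x : Pn n) : PnLE x x := fun i => by
  simp [Set.diff_self]

lemma pnle_trans {n : ℕ} {x y z : Pn n} (h1 : PnLE x y) (h2 : PnLE y z) : PnLE x z := by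
  intro i
  refine ((h1 i).union (h2 i)).subset ?_
  intro a ⟨ha1, ha2⟩
  by_cases h : a ∈ y.1 i
  · exact Or.inr ⟨h, ha2⟩
  · exact Or.inl ⟨ha1, h⟩

lemma tower_pseudo (C : ℕ → Set ℕ) (hinf : ∀ k, (C k).Infinite)
    (hdec : ∀ m k, m ≤ k → (C k \ C m).Finite) :
    ∃ z : Set ℕ, z.Infinite ∧ ∀ m, (z \ C m).Finite := by
  set S : ℕ → Set ℕ := fun k => {a | ∀ m ≤ k, a ∈ C m} with hS
  have hSinf : ∀ k, (S k).Infinite := by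
    intro k
    have hfin : (⋃ m ∈ Set.Iic k, (C k \ C m)).Finite :=
      (Set.finite_Iic k).biUnion (fun m hm => hdec m k hm)
    refine (((hinf k).diff hfin)).mono ?_
    rintro a ⟨hak, ha⟩ m hm
    by_contra ham
    exact ha (Set.mem_biUnion hm ⟨hak, ham⟩)
  have hstep : ∀ a k, ∃ b ∈ S k, a < b := fun a k => (hSinf k).exists_gt a
  choose f hf1 hf2 using hstep
  let b : ℕ → ℕ := fun k => Nat.rec (f 0 0) (fun k ih => f ih (k+1)) k
  have hb1 : ∀ k, b k ∈ S k := by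
    intro k
    cases k with
    | zero => exact hf1 0 0
    | succ m => exact hf1 _ _
  have hbmono : StrictMono b := strictMono_nat_of_lt_succ (fun k => hf2 (b k) (k+1))
  refine ⟨Set.range b, Set.infinite_range_of_injective hbmono.injective, ?_⟩
  intro m
  have hsub : Set.range b \ C m ⊆ b '' Set.Iio m := by
    rintro a ⟨⟨k, rfl⟩, ha⟩
    refine ⟨k, ?_, rfl⟩
    by_contra h
    exact ha (hb1 k m (Nat.le_of_not_lt h))
  exact ((Set.finite_Iio m).image b).subset hsub

/-- Properties of a base tree: (i) every `≤`-decreasing chain in `T` indexed by a limit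
ordinal of countable cofinality has a lower bound in `T`; (ii) every node of `T` has
extensions in arbitrarily high levels below `𝔥(n)`. -/
theorem stmt9 (n : ℕ) (hn : 0 < n) (T : Set (Pn n)) (L : Ordinal → Set (Pn n))
    (hT : IsBaseTree n T L) :
    (∀ lam : Ordinal, Order.IsSuccLimit lam → lam.cof = Cardinal.aleph0 →
      ∀ x : Ordinal → Pn n, (∀ ξ < lam, x ξ ∈ T) →
        (∀ ξ η : Ordinal, ξ < η → η < lam → PnLE (x η) (x ξ)) →
        ∃ y ∈ T, ∀ ξ < lam, PnLE y (x ξ)) ∧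
    (∀ x ∈ T, ∀ α < (hdist n).ord,
      ∃ β : Ordinal, α ≤ β ∧ β < (hdist n).ord ∧ ∃ y ∈ L β, PnLE y x) := by
  constructor
  · intro lam hlim hcof x hxT hxdec
    obtain ⟨ι, f, hlsub, hmk⟩ := Ordinal.exists_lsub_cof lam
    rw [hcof] at hmk
    haveI hcount : Countable ι := Cardinal.mk_le_aleph0_iff.1 hmk.le
    haveI hne : Nonempty ι := Cardinal.mk_ne_zero_iff.1 (by rw [hmk]; exact Cardinal.aleph0_ne_zero)
    obtain ⟨e, he⟩ := exists_surjective_nat ι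
    have hglt : ∀ k : ℕ, f (e k) < lam := fun k => hlsub ▸ Ordinal.lt_lsub f _
    have hcofinal : ∀ ξ < lam, ∃ k : ℕ, ξ ≤ f (e k) := by
      intro ξ hξ
      rw [← hlsub] at hξ
      obtain ⟨i, hi⟩ := Ordinal.lt_lsub_iff.1 hξ
      obtain ⟨k, rfl⟩ := he i
      exact ⟨k, hi⟩
    set h : ℕ → Ordinal := fun k => Nat.rec (f (e 0)) (fun k ih => max ih (f (e (k+1)))) k with hh
    have hhlt : ∀ k, h k < lam := by
      intro k
      induction k with
      | zero => exact hglt 0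
      | succ m ih => exact max_lt ih (hglt (m+1))
    have hhmono : Monotone h := monotone_nat_of_le_succ (fun k => le_max_left _ _)
    have hgh : ∀ k, f (e k) ≤ h k := by
      intro k
      cases k with
      | zero => exact le_rfl
      | succ m => exact le_max_right _ _
    have hA : ∀ m k, m ≤ k → PnLE (x (h k)) (x (h m)) := by
      intro m k hmk
      rcases (hhmono hmk).lt_or_eq with hlt | heq
      · exact hxdec (h m) (h k) hlt (hhlt k)
      · rw [heq]; exact pnle_refl _
    have hz : ∀ i : Fin n, ∃ z : Set ℕ, z.Infinite ∧ ∀ m, (z \ (x (h m)).1 i).Finite := by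
      intro i
      exact tower_pseudo (fun k => (x (h k)).1 i) (fun k => (x (h k)).2 i)
        (fun m k hmk => hA m k hmk i)
    choose z hz1 hz2 using hz
    obtain ⟨y, hyT, hyZ⟩ := hT.dense ⟨z, hz1⟩
    refine ⟨y, hyT, fun ξ hξ => ?_⟩
    obtain ⟨k, hk⟩ := hcofinal ξ hξ
    have h1 : PnLE (⟨z, hz1⟩ : Pn n) (x (h k)) := fun i => hz2 i k
    have h2 : PnLE (x (h k)) (x ξ) := by
      rcases (hk.trans (hgh k)).lt_or_eq with hlt | heq
      · exact hxdec ξ (h k) hlt (hhlt k)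
      · rw [← heq]; exact pnle_refl _
    exact pnle_trans (pnle_trans hyZ h1) h2
  · intro x hx α hα
    obtain ⟨w, hwL, hcompat⟩ := hT.level_maximal α hα x
    obtain ⟨y, hyT, hyZ⟩ := hT.dense ⟨fun i => x.1 i ∩ w.1 i, hcompat⟩
    have hyx : PnLE y x := by
      intro i
      refine (hyZ i).subset ?_
      rintro a ⟨h1, h2⟩
      exact ⟨h1, fun hc => h2 hc.1⟩
    have hyw : PnLE y w := by
      intro i
      refine (hyZ i).subset ?_
      rintro a ⟨h1, h2⟩
      exact ⟨h1, fun hc => h2 hc.2⟩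
    obtain ⟨β, hβ, hyL⟩ := hT.level_covers y hyT
    refine ⟨β, ?_, hβ, y, hyL, hyx⟩
    obtain ⟨hwT, htyw⟩ := (hT.level_eq α hα w).1 hwL
    obtain ⟨hyT', htyy⟩ := (hT.level_eq β hβ y).1 hyL
    rw [← htyw, ← htyy]
    have hsub : predT T w ⊆ predT T y := by
      rintro u ⟨huT, hwu, hnuw⟩
      exact ⟨huT, pnle_trans hyw hwu, fun huy => hnuw (pnle_trans huy hyw)⟩
    haveI := hT.wellOrdered w hwT
    haveI := hT.wellOrdered y hyT'
    refine RelEmbedding.ordinal_type_le ⟨⟨fun a => ⟨a.1, hsub a.2⟩, ?_⟩, ?_⟩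
    · intro a b hab
      simpa [Subtype.ext_iff] using hab
    · intro a b
      exact Iff.rfl
end

section
/- Let 0 < n < ω. For every n-tuple ⟨B_0,…,B_{n−1}⟩ of infinite subsets of ℕ there exists an n-tuple ⟨x_0,…,x_{n−1}⟩ of infinite subsets of ℕ with x_i ⊆ B_i for every i < n, such that, letting A = x_0 ∪ ⋯ ∪ x_{n−1} with increasing enumeration ⟨k_j : j < ω⟩, one has x_i = {k_j : j ≡ i (mod n)} for every i < n. Consequently, the set of such interleaved tuples is dense in P_n. -/
/-- For every `n`-tuple `⟨B 0, …, B (n-1)⟩` of infinite subsets of ℕ there is an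
`n`-tuple `⟨x 0, …, x (n-1)⟩` of infinite sets with `x i ⊆ B i` which is interleaved:
letting `A = x 0 ∪ ⋯ ∪ x (n-1)` with increasing enumeration `⟨k_j⟩`, one has
`x i = {k_j : j ≡ i (mod n)}`.  Consequently the interleaved tuples are dense in
`Pn n`. -/
theorem stmt11 (n : ℕ) (hn : 0 < n) :
    (∀ B : Fin n → Set ℕ, (∀ i : Fin n, (B i).Infinite) →
      ∃ x : Fin n → Set ℕ, (∀ i : Fin n, (x i).Infinite) ∧
        (∀ i : Fin n, x i ⊆ B i) ∧
        (∀ i : Fin n, x i = sliceMod n (⋃ j : Fin n, x j) (i : ℕ))) ∧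
    PnDense {z : Pn n | ∀ i : Fin n, z.1 i = sliceMod n (⋃ j : Fin n, z.1 j) (i : ℕ)} := by
  have main : ∀ B : Fin n → Set ℕ, (∀ i : Fin n, (B i).Infinite) →
      ∃ x : Fin n → Set ℕ, (∀ i : Fin n, (x i).Infinite) ∧
        (∀ i : Fin n, x i ⊆ B i) ∧
        (∀ i : Fin n, x i = sliceMod n (⋃ j : Fin n, x j) (i : ℕ)) := by
    intro B hB
    have hex : ∀ (j k : ℕ), ∃ m, m ∈ B ⟨j % n, Nat.mod_lt j hn⟩ ∧ k < m := by
      intro j k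
      obtain ⟨m, hm, hk⟩ := (hB _).exists_gt k
      exact ⟨m, hm, hk⟩
    let g : ℕ → ℕ := fun j => Nat.rec ((hex 0 0).choose) (fun j ih => (hex (j+1) ih).choose) j
    have hgmem : ∀ j, g j ∈ B ⟨j % n, Nat.mod_lt j hn⟩ := by
      intro j
      cases j with
      | zero => exact (hex 0 0).choose_spec.1
      | succ j => exact (hex (j+1) (g j)).choose_spec.1
    have hglt : ∀ j, g j < g (j+1) := fun j => (hex (j+1) (g j)).choose_spec.2
    have hg : StrictMono g := strictMono_nat_of_lt_succ hglt
    set x : Fin n → Set ℕ := fun i => g '' {j | j % n = (i : ℕ)} with hxdef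
    have hxB : ∀ i, x i ⊆ B i := by
      intro i y hy
      obtain ⟨j, hj, rfl⟩ := hy
      have h2 : (⟨j % n, Nat.mod_lt j hn⟩ : Fin n) = i := Fin.ext hj
      exact h2 ▸ hgmem j
    have hA : (⋃ j : Fin n, x j) = Set.range g := by
      apply Set.eq_of_subset_of_subset
      · exact Set.iUnion_subset fun i => Set.image_subset_range _ _
      · rintro y ⟨j, rfl⟩
        exact Set.mem_iUnion.2 ⟨⟨j % n, Nat.mod_lt j hn⟩, j, rfl, rfl⟩
    have hidx : ∀ j, setIdx (Set.range g) (g j) = j := by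
      intro j
      have hset : {y ∈ Set.range g | y < g j} = g '' Set.Iio j := by
        ext y
        constructor
        · rintro ⟨⟨m, rfl⟩, hlt⟩
          exact ⟨m, hg.lt_iff_lt.1 hlt, rfl⟩
        · rintro ⟨m, hm, rfl⟩
          exact ⟨⟨m, rfl⟩, hg hm⟩
      rw [setIdx, hset, Set.ncard_image_of_injective _ hg.injective,
        ← Finset.coe_range, Set.ncard_coe_finset, Finset.card_range]
    have hslice : ∀ i : Fin n, x i = sliceMod n (Set.range g) (i : ℕ) := by
      intro i
      ext y
      constructor
      · rintro ⟨j, hj, rfl⟩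
        exact ⟨⟨j, rfl⟩, by rw [hidx j]; exact hj⟩
      · rintro ⟨⟨j, rfl⟩, hmod⟩
        exact ⟨j, by rwa [hidx j] at hmod, rfl⟩
    have hxinf : ∀ i, (x i).Infinite := by
      intro i
      have hinf : Set.Infinite {j | j % n = (i : ℕ)} := by
        apply Set.infinite_of_injective_forall_mem (f := fun k : ℕ => (i : ℕ) + k * n)
        · intro a b hab
          simp only [add_right_inj] at hab
          exact Nat.eq_of_mul_eq_mul_right hn hab
        · intro k
          simp only [Set.mem_setOf_eq, Nat.add_mul_mod_self_right]
          exact Nat.mod_eq_of_lt i.isLt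
      exact hinf.image (hg.injective.injOn)
    exact ⟨x, hxinf, hxB, fun i => by rw [hslice i, hA]⟩
  refine ⟨main, ?_⟩
  intro z
  obtain ⟨x, hinf, hsub, hsl⟩ := main z.1 z.2
  refine ⟨⟨x, hinf⟩, hsl, fun i => ?_⟩
  have : x i \ z.1 i = ∅ := Set.diff_eq_empty.2 (hsub i)
  rw [this]
  exact Set.finite_empty
end
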